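/- arXiv:2009.14429 — 3 statements merged into one kernel-verified Lean document; each statement's English description precedes it below -/
import Mathlib

section
/- Let u_0 ∈ L²(Ω) and fix n and T > 0. There exists a unique u ∈ L²([0,T] × Ω) satisfying the integral formulation of the Neumann evolution problem: u(t,x) = u_0(x) + ∫_0^t L_n u(s,·)(x) ds for a.e. (t,x) ∈ [0,T] × Ω. -/
open MeasureTheory Set Filter Topology Bornology

/-- Characteristic function of a set, real-valued. -/
noncomputable def chi {α : Type*} (A : Set α) (x : α) : ℝ :=
  @ite _ (x ∈ A) (Classical.propDecidable _) 1 0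

/-- The nonlocal operator `L_n` associated with the partition `(A, B)` of `Ω̄`
and the kernels `J, G, R`. -/
noncomputable def Lop {N : ℕ} (Ω A B : Set (Fin N → ℝ))
    (J G R : (Fin N → ℝ) → (Fin N → ℝ) → ℝ) (f : (Fin N → ℝ) → ℝ) (x : Fin N → ℝ) : ℝ :=
  chi A x * (∫ y in Ω, chi A y * J x y * (f y - f x))
    + chi B x * (∫ y in Ω, chi B y * G x y * (f y - f x))
    + chi A x * (∫ y in Ω, chi B y * R x y * (f y - f x))
    + chi B x * (∫ y in Ω, chi A y * R x y * (f y - f x))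

/-- Hypothesis (H) on a kernel: continuity, nonnegativity, positivity on the diagonal,
symmetry, and unit total mass. -/
def KernelH {N : ℕ} (V : (Fin N → ℝ) → (Fin N → ℝ) → ℝ) : Prop :=
  Continuous (fun p : (Fin N → ℝ) × (Fin N → ℝ) => V p.1 p.2) ∧
    (∀ x y, 0 ≤ V x y) ∧ (∀ x, 0 < V x x) ∧ (∀ x y, V x y = V y x) ∧
    (∀ x, (∫ y, V x y) = 1)


/-! The four kernels of `L_n` combine into one kernel `W`, bounded by some `S` on `Ω × Ω` because
they are continuous and `Ω̄` is compact, so that `L_n f x = ∫ W x y (f y - f x) dy =: K f x` for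
`x ∈ Ω`. From `|K f x| ≤ S (‖f‖₁ + |Ω| |f x|)` one gets `|Kᵏ u₀ x| ≤ Dᵏ (|u₀ x| + ‖u₀‖₁)` with
`D = S (1 + 2 |Ω|)`, which dominates the series `u t = ∑ tᵏ / k! Kᵏ u₀` well enough to apply `K`
and to integrate in time term by term: this is the solution. The same bound shows that the
difference `w` of two solutions satisfies `‖w t‖₁ ≤ 2 S |Ω| ∫₀ᵗ ‖w s‖₁ ds`, and iterating this
inequality forces `w = 0`. -/

open scoped Nat

section KernelOperator

variable {X : Type*} [MeasurableSpace X] {μ : Measure X} {W : X → X → ℝ} {S : ℝ}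

noncomputable def kernelOp (μ : Measure X) (W : X → X → ℝ) (f : X → ℝ) (x : X) : ℝ :=
  ∫ y, W x y * (f y - f x) ∂μ

lemma kernelOp_const_mul (c : ℝ) (f : X → ℝ) (x : X) :
    kernelOp μ W (fun y => c * f y) x = c * kernelOp μ W f x := by
  rw [kernelOp, kernelOp, ← integral_const_mul]
  congr 1 with y
  ring

variable [IsFiniteMeasure μ] (hW : StronglyMeasurable (Function.uncurry W))
  (hWS : ∀ x y, ‖W x y‖ ≤ S)
include hW hWS

lemma integrable_kernel_mul_sub {f : X → ℝ} (hf : Integrable f μ) (x : X) :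
    Integrable (fun y => W x y * (f y - f x)) μ :=
  (hf.sub (integrable_const (f x))).bdd_mul
    (hW.comp_measurable measurable_prodMk_left).aestronglyMeasurable (ae_of_all _ (hWS x))

lemma kernelOp_sub {f g : X → ℝ} (hf : Integrable f μ) (hg : Integrable g μ) (x : X) :
    kernelOp μ W (f - g) x = kernelOp μ W f x - kernelOp μ W g x := by
  rw [kernelOp, kernelOp, kernelOp, ← integral_sub (integrable_kernel_mul_sub hW hWS hf x)
    (integrable_kernel_mul_sub hW hWS hg x)]
  congr 1 with y
  simp only [Pi.sub_apply]
  ring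

lemma integral_norm_kernel_mul_sub_le {f : X → ℝ} (hf : Integrable f μ) (x : X) :
    ∫ y, ‖W x y * (f y - f x)‖ ∂μ ≤ S * ((∫ y, ‖f y‖ ∂μ) + μ.real univ * ‖f x‖) := by
  have hS : 0 ≤ S := (norm_nonneg _).trans (hWS x x)
  calc ∫ y, ‖W x y * (f y - f x)‖ ∂μ ≤ ∫ y, S * (‖f y‖ + ‖f x‖) ∂μ := by
        refine integral_mono (integrable_kernel_mul_sub hW hWS hf x).norm
          ((hf.norm.add (integrable_const _)).const_mul S) fun y => ?_
        rw [norm_mul]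
        exact mul_le_mul (hWS x y) (norm_sub_le _ _) (norm_nonneg _) hS
    _ = S * ((∫ y, ‖f y‖ ∂μ) + μ.real univ * ‖f x‖) := by
        rw [integral_const_mul, integral_add hf.norm (integrable_const _), integral_const,
          smul_eq_mul]

lemma norm_kernelOp_le {f : X → ℝ} (hf : Integrable f μ) (x : X) :
    ‖kernelOp μ W f x‖ ≤ S * ((∫ y, ‖f y‖ ∂μ) + μ.real univ * ‖f x‖) :=
  (norm_integral_le_integral_norm _).trans (integral_norm_kernel_mul_sub_le hW hWS hf x)

omit hWS in
lemma stronglyMeasurable_kernelOp {f : X → ℝ} (hf : StronglyMeasurable f) :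
    StronglyMeasurable (kernelOp μ W f) :=
  (hW.mul ((hf.comp_measurable measurable_snd).sub
    (hf.comp_measurable measurable_fst))).integral_prod_right'

lemma integrable_kernelOp {f : X → ℝ} (hfm : StronglyMeasurable f) (hf : Integrable f μ) :
    Integrable (kernelOp μ W f) μ :=
  ((integrable_const _).add (hf.norm.const_mul _)).const_mul S |>.mono'
    (stronglyMeasurable_kernelOp hW hfm).aestronglyMeasurable
    (ae_of_all _ (norm_kernelOp_le hW hWS hf))

lemma kernelOp_tsum {f : ℕ → X → ℝ} {b : ℕ → ℝ} {w : X → ℝ} (hf : ∀ k, Integrable (f k) μ)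
    (hw : Integrable w μ) (hb : Summable b) (hfb : ∀ k y, ‖f k y‖ ≤ b k * w y) (x : X) :
    kernelOp μ W (fun y => ∑' k, f k y) x = ∑' k, kernelOp μ W (f k) x := by
  have hS : 0 ≤ S := (norm_nonneg _).trans (hWS x x)
  have hsum : ∀ y, Summable fun k => f k y := fun y =>
    (hb.mul_right (w y)).of_norm_bounded (hfb · y)
  refine (hasSum_integral_of_dominated_convergence (fun k y => S * (b k * (w y + w x)))
    (fun k => (integrable_kernel_mul_sub hW hWS (hf k) x).aestronglyMeasurable)
    (fun k => ae_of_all _ fun y => ?_) (ae_of_all _ fun y => ((hb.mul_right _).mul_left S))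
    ?_ (ae_of_all _ fun y => ((hsum y).hasSum.sub (hsum x).hasSum).mul_left (W x y))).tsum_eq.symm
  · rw [norm_mul, mul_add (b k)]
    exact mul_le_mul (hWS x y) ((norm_sub_le _ _).trans (add_le_add (hfb k y) (hfb k x)))
      (norm_nonneg _) hS
  · simp_rw [tsum_mul_left, tsum_mul_right]
    exact ((hw.add (integrable_const _)).const_mul _).const_mul S

end KernelOperator

section PowerSeriesIntegral

lemma setIntegral_Ioc_pow_div_factorial (k : ℕ) {t : ℝ} (ht : 0 ≤ t) :
    ∫ s in Ioc 0 t, s ^ k / k ! = t ^ (k + 1) / (k + 1)! := by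
  rw [integral_div, ← intervalIntegral.integral_of_le ht, integral_pow, Nat.factorial_succ]
  push_cast
  field_simp
  ring

lemma setIntegral_Ioc_tsum_pow_div_factorial_mul {a : ℕ → ℝ} {C D t : ℝ}
    (ha : ∀ k, ‖a k‖ ≤ C * D ^ k) (ht : 0 ≤ t) :
    ∫ s in Ioc 0 t, ∑' k, s ^ k / k ! * a k = ∑' k, t ^ (k + 1) / (k + 1)! * a k := by
  have hbound : ∀ k, ∀ s ∈ Ioc 0 t, ‖s ^ k / k ! * a k‖ ≤ C * ((t * D) ^ k / k !) := by
    intro k s hs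
    have hst : |s| ^ k / k ! ≤ t ^ k / k ! := by
      gcongr
      exact abs_le.2 ⟨by linarith [hs.1], hs.2⟩
    calc ‖s ^ k / k ! * a k‖ = |s| ^ k / k ! * ‖a k‖ := by
          rw [norm_mul, norm_div, norm_pow, Real.norm_eq_abs, Real.norm_natCast]
      _ ≤ t ^ k / k ! * (C * D ^ k) := mul_le_mul hst (ha k) (norm_nonneg _) (by positivity)
      _ = C * ((t * D) ^ k / k !) := by ring
  have hae : ∀ k, ∀ᵐ s ∂volume.restrict (Ioc 0 t), ‖s ^ k / k ! * a k‖ ≤ C * ((t * D) ^ k / k !) :=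
    fun k => (ae_restrict_iff' measurableSet_Ioc).2 (ae_of_all _ (hbound k))
  have hsum := (Real.summable_pow_div_factorial (t * D)).mul_left C
  have hlim : ∀ᵐ s ∂volume.restrict (Ioc 0 t),
      HasSum (fun k => s ^ k / k ! * a k) (∑' k, s ^ k / k ! * a k) := by
    filter_upwards [ae_all_iff.2 hae] with s hs
    exact (hsum.of_norm_bounded hs).hasSum
  rw [← (hasSum_integral_of_dominated_convergence (F := fun k s => s ^ k / k ! * a k) _
    (fun k => (((continuous_pow k).div_const _).mul continuous_const).aestronglyMeasurable)
    hae (ae_of_all _ fun _ => hsum) (integrable_const _) hlim).tsum_eq]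
  congr 1 with k
  rw [integral_mul_const, setIntegral_Ioc_pow_div_factorial k ht]

end PowerSeriesIntegral

section ExponentialSeries

variable {X : Type*} [MeasurableSpace X] {μ : Measure X} {W : X → X → ℝ} {S : ℝ}

noncomputable def normWeight (μ : Measure X) (g : X → ℝ) (x : X) : ℝ :=
  ‖g x‖ + ∫ y, ‖g y‖ ∂μ

lemma normWeight_nonneg (g : X → ℝ) (x : X) : 0 ≤ normWeight μ g x :=
  add_nonneg (norm_nonneg _) (integral_nonneg fun _ => norm_nonneg _)

noncomputable def kernelGrowth (μ : Measure X) (S : ℝ) : ℝ := S * (1 + 2 * μ.real univ)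

lemma kernelGrowth_nonneg (hS : 0 ≤ S) : 0 ≤ kernelGrowth μ S :=
  mul_nonneg hS (by have : 0 ≤ μ.real univ := measureReal_nonneg; linarith)

variable [IsFiniteMeasure μ]

lemma integrable_normWeight {g : X → ℝ} (hg : Integrable g μ) : Integrable (normWeight μ g) μ :=
  hg.norm.add (integrable_const _)

lemma integral_normWeight_le {g : X → ℝ} (hg : Integrable g μ) (x : X) :
    ∫ y, normWeight μ g y ∂μ ≤ (1 + μ.real univ) * normWeight μ g x := by
  have hB : 0 ≤ ∫ y, ‖g y‖ ∂μ := integral_nonneg fun _ => norm_nonneg _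
  have hm : 0 ≤ μ.real univ := measureReal_nonneg
  unfold normWeight
  rw [integral_add hg.norm (integrable_const _), integral_const, smul_eq_mul]
  nlinarith [norm_nonneg (g x)]

noncomputable def expKernelOp (μ : Measure X) (W : X → X → ℝ) (g : X → ℝ) (t : ℝ) (x : X) : ℝ :=
  ∑' k, t ^ k / k ! * (kernelOp μ W)^[k] g x

variable (hW : StronglyMeasurable (Function.uncurry W)) (hWS : ∀ x y, ‖W x y‖ ≤ S)
include hW hWS

lemma norm_kernelOp_le_of_le_normWeight {f g : X → ℝ} (hf : Integrable f μ) (hg : Integrable g μ)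
    {c : ℝ} (hc : 0 ≤ c) (hfg : ∀ x, ‖f x‖ ≤ c * normWeight μ g x) (x : X) :
    ‖kernelOp μ W f x‖ ≤ c * kernelGrowth μ S * normWeight μ g x := by
  have hS : 0 ≤ S := (norm_nonneg _).trans (hWS x x)
  have hm : 0 ≤ μ.real univ := measureReal_nonneg
  have hL1 : ∫ y, ‖f y‖ ∂μ ≤ c * ((1 + μ.real univ) * normWeight μ g x) :=
    calc ∫ y, ‖f y‖ ∂μ ≤ ∫ y, c * normWeight μ g y ∂μ :=
          integral_mono hf.norm ((integrable_normWeight hg).const_mul c) hfg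
      _ ≤ c * ((1 + μ.real univ) * normWeight μ g x) := by
          rw [integral_const_mul]
          exact mul_le_mul_of_nonneg_left (integral_normWeight_le hg x) hc
  calc ‖kernelOp μ W f x‖ ≤ S * ((∫ y, ‖f y‖ ∂μ) + μ.real univ * ‖f x‖) :=
        norm_kernelOp_le hW hWS hf x
    _ ≤ S * (c * ((1 + μ.real univ) * normWeight μ g x)
          + μ.real univ * (c * normWeight μ g x)) := by
        gcongr
        exact hfg x
    _ = c * kernelGrowth μ S * normWeight μ g x := by
        rw [kernelGrowth]
        ring

variable {g : X → ℝ} (hgm : StronglyMeasurable g) (hg : Integrable g μ)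
include hgm hg

lemma stronglyMeasurable_and_integrable_iterate_kernelOp (k : ℕ) :
    StronglyMeasurable ((kernelOp μ W)^[k] g) ∧ Integrable ((kernelOp μ W)^[k] g) μ :=
  Function.Iterate.rec (fun f => StronglyMeasurable f ∧ Integrable f μ) ⟨hgm, hg⟩
    (fun _ hf => ⟨stronglyMeasurable_kernelOp hW hf.1, integrable_kernelOp hW hWS hf.1 hf.2⟩) k

lemma norm_iterate_kernelOp_le (k : ℕ) (x : X) :
    ‖(kernelOp μ W)^[k] g x‖ ≤ kernelGrowth μ S ^ k * normWeight μ g x := by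
  induction k generalizing x with
  | zero =>
    simpa [normWeight] using integral_nonneg fun y => norm_nonneg (g y)
  | succ k ih =>
    rw [Function.iterate_succ_apply', pow_succ]
    exact norm_kernelOp_le_of_le_normWeight hW hWS
      (stronglyMeasurable_and_integrable_iterate_kernelOp hW hWS hgm hg k).2 hg
      (pow_nonneg (kernelGrowth_nonneg ((norm_nonneg _).trans (hWS x x))) k) ih x

lemma norm_expTerm_le (t : ℝ) (k : ℕ) (x : X) :
    ‖t ^ k / k ! * (kernelOp μ W)^[k] g x‖
      ≤ (|t| * kernelGrowth μ S) ^ k / k ! * normWeight μ g x := by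
  rw [norm_mul, norm_div, norm_pow, Real.norm_eq_abs, Real.norm_natCast, mul_pow,
    mul_div_right_comm, mul_assoc]
  gcongr
  exact norm_iterate_kernelOp_le hW hWS hgm hg k x

lemma summable_expTerm (t : ℝ) (x : X) :
    Summable fun k => t ^ k / k ! * (kernelOp μ W)^[k] g x :=
  ((Real.summable_pow_div_factorial _).mul_right _).of_norm_bounded
    (norm_expTerm_le hW hWS hgm hg t · x)

lemma norm_expKernelOp_le (t : ℝ) (x : X) :
    ‖expKernelOp μ W g t x‖ ≤ Real.exp (|t| * kernelGrowth μ S) * normWeight μ g x :=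
  tsum_of_norm_bounded
    ((Real.exp_eq_exp_ℝ ▸ NormedSpace.expSeries_div_hasSum_exp _).mul_right _)
    (norm_expTerm_le hW hWS hgm hg t · x)

lemma stronglyMeasurable_uncurry_expKernelOp :
    StronglyMeasurable (Function.uncurry (expKernelOp μ W g)) := by
  refine stronglyMeasurable_of_tendsto atTop
    (f := fun n (p : ℝ × X) => ∑ k ∈ Finset.range n, p.1 ^ k / k ! * (kernelOp μ W)^[k] g p.2)
    (fun n => Finset.stronglyMeasurable_fun_sum _ fun k _ => ?_)
    (tendsto_pi_nhds.2 fun p => (summable_expTerm hW hWS hgm hg p.1 p.2).hasSum.tendsto_sum_nat)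
  exact ((measurable_fst.pow_const k).div_const _).stronglyMeasurable.mul
    ((stronglyMeasurable_and_integrable_iterate_kernelOp hW hWS hgm hg k).1.comp_measurable
      measurable_snd)

lemma integrable_expKernelOp (t : ℝ) : Integrable (expKernelOp μ W g t) μ :=
  ((integrable_normWeight hg).const_mul _).mono'
    ((stronglyMeasurable_uncurry_expKernelOp hW hWS hgm hg).comp_measurable
      measurable_prodMk_left).aestronglyMeasurable
    (ae_of_all _ (norm_expKernelOp_le hW hWS hgm hg t))

lemma kernelOp_expKernelOp (t : ℝ) (x : X) :
    kernelOp μ W (expKernelOp μ W g t) x = ∑' k, t ^ k / k ! * (kernelOp μ W)^[k + 1] g x := by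
  refine (kernelOp_tsum hW hWS
    (fun k => (stronglyMeasurable_and_integrable_iterate_kernelOp hW hWS hgm hg k).2.const_mul _)
    (integrable_normWeight hg) (Real.summable_pow_div_factorial _)
    (norm_expTerm_le hW hWS hgm hg t) x).trans (tsum_congr fun k => ?_)
  rw [kernelOp_const_mul, Function.iterate_succ_apply']

lemma expKernelOp_eq_add_setIntegral {t : ℝ} (ht : 0 ≤ t) (x : X) :
    expKernelOp μ W g t x = g x + ∫ s in Ioc 0 t, kernelOp μ W (expKernelOp μ W g s) x := by
  have hbound : ∀ k, ‖(kernelOp μ W)^[k + 1] g x‖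
      ≤ kernelGrowth μ S * normWeight μ g x * kernelGrowth μ S ^ k := fun k =>
    (norm_iterate_kernelOp_le hW hWS hgm hg (k + 1) x).trans_eq (by ring)
  simp_rw [kernelOp_expKernelOp hW hWS hgm hg]
  rw [setIntegral_Ioc_tsum_pow_div_factorial_mul hbound ht, expKernelOp,
    (summable_expTerm hW hWS hgm hg t x).tsum_eq_zero_add]
  simp

omit hg in
lemma memLp_uncurry_expKernelOp (hg : MemLp g 2 μ) (T : ℝ) :
    MemLp (Function.uncurry (expKernelOp μ W g)) 2 ((volume.restrict (Icc 0 T)).prod μ) := by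
  have hgi := hg.integrable one_le_two
  have hdom : MemLp (fun p : ℝ × X => Real.exp (T * kernelGrowth μ S) * normWeight μ g p.2) 2
      ((volume.restrict (Icc 0 T)).prod μ) :=
    ((hg.norm.add (memLp_const _)).const_mul _).comp_snd _
  refine hdom.of_le (stronglyMeasurable_uncurry_expKernelOp hW hWS hgm hgi).aestronglyMeasurable ?_
  filter_upwards [Measure.quasiMeasurePreserving_fst.ae (ae_restrict_mem measurableSet_Icc)]
    with p hp
  have hD := kernelGrowth_nonneg (μ := μ) ((norm_nonneg _).trans (hWS p.2 p.2))
  calc ‖expKernelOp μ W g p.1 p.2‖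
      ≤ Real.exp (|p.1| * kernelGrowth μ S) * normWeight μ g p.2 :=
        norm_expKernelOp_le hW hWS hgm hgi p.1 p.2
    _ ≤ Real.exp (T * kernelGrowth μ S) * normWeight μ g p.2 := by
        gcongr
        · exact normWeight_nonneg g p.2
        · exact abs_le.2 ⟨by linarith [hp.1, hp.2], hp.2⟩
    _ ≤ ‖Real.exp (T * kernelGrowth μ S) * normWeight μ g p.2‖ := Real.le_norm_self _

end ExponentialSeries

section Gronwall

lemma ae_eq_zero_of_le_mul_setIntegral {ψ : ℝ → ℝ} {C T : ℝ} (hψ0 : ∀ t, 0 ≤ ψ t)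
    (hψ : IntegrableOn ψ (Icc 0 T))
    (hle : ∀ᵐ t ∂volume.restrict (Icc 0 T), ψ t ≤ C * ∫ s in Ioc 0 t, ψ s) :
    ∀ᵐ t ∂volume.restrict (Icc 0 T), ψ t = 0 := by
  set C' := max C 0
  set M := ∫ s in Icc 0 T, ψ s
  have hmem : ∀ᵐ t ∂volume.restrict (Icc 0 T), t ∈ Icc 0 T := ae_restrict_mem measurableSet_Icc
  have hsub : ∀ {t}, t ∈ Icc (0 : ℝ) T → Ioc 0 t ⊆ Icc 0 T := fun ht s hs =>
    ⟨hs.1.le, hs.2.trans ht.2⟩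
  have hle' : ∀ᵐ t ∂volume.restrict (Icc 0 T), ψ t ≤ C' * ∫ s in Ioc 0 t, ψ s := by
    filter_upwards [hle] with t ht
    exact ht.trans (mul_le_mul_of_nonneg_right (le_max_left _ _)
      (integral_nonneg fun s => hψ0 s))
  have hiter : ∀ k : ℕ,
      ∀ᵐ t ∂volume.restrict (Icc 0 T), ψ t ≤ M * C' * ((C' * t) ^ k / k !) := by
    intro k
    induction k with
    | zero =>
      filter_upwards [hle', hmem] with t ht htT
      calc ψ t ≤ C' * ∫ s in Ioc 0 t, ψ s := ht
        _ ≤ C' * M := mul_le_mul_of_nonneg_left (setIntegral_mono_set hψ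
            (ae_of_all _ fun s => hψ0 s) (hsub htT).eventuallyLE) (le_max_right _ _)
        _ = M * C' * ((C' * t) ^ 0 / (0 : ℕ)!) := by simp [mul_comm]
    | succ k ih =>
      filter_upwards [hle', hmem] with t ht htT
      have hpoly : ∀ s, M * C' * ((C' * s) ^ k / k !) = M * C' * C' ^ k * (s ^ k / k !) :=
        fun s => by ring
      calc ψ t ≤ C' * ∫ s in Ioc 0 t, ψ s := ht
        _ ≤ C' * ∫ s in Ioc 0 t, M * C' * ((C' * s) ^ k / k !) := by
            refine mul_le_mul_of_nonneg_left (integral_mono_ae (hψ.mono_set (hsub htT))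
              (Continuous.integrableOn_Ioc (by fun_prop))
              (ae_restrict_of_ae_restrict_of_subset (hsub htT) ih)) (le_max_right _ _)
        _ = M * C' * ((C' * t) ^ (k + 1) / (k + 1)!) := by
            simp_rw [hpoly]
            rw [integral_const_mul, setIntegral_Ioc_pow_div_factorial k htT.1]
            ring
  filter_upwards [ae_all_iff.2 hiter] with t ht
  have hlim : Tendsto (fun k : ℕ => M * C' * ((C' * t) ^ k / k !)) atTop (𝓝 0) := by
    simpa using (FloorSemiring.tendsto_pow_div_factorial_atTop (C' * t)).const_mul (M * C')
  exact le_antisymm (ge_of_tendsto hlim (Eventually.of_forall ht)) (hψ0 t)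

end Gronwall

section IntegralEquation

variable {X : Type*} [MeasurableSpace X] {μ : Measure X} [IsFiniteMeasure μ] {W : X → X → ℝ}
  {S : ℝ} (hW : StronglyMeasurable (Function.uncurry W)) (hWS : ∀ x y, ‖W x y‖ ≤ S)
include hW hWS

theorem exists_solution_kernelOp {g : X → ℝ} (hg : MemLp g 2 μ) (T : ℝ) :
    ∃ u : ℝ → X → ℝ, (∀ t, Integrable (u t) μ) ∧
      MemLp (Function.uncurry u) 2 ((volume.restrict (Icc 0 T)).prod μ) ∧
      ∀ᵐ p ∂(volume.restrict (Icc 0 T)).prod μ,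
        u p.1 p.2 = g p.2 + ∫ s in Ioc 0 p.1, kernelOp μ W (u s) p.2 := by
  have hgm := hg.1.stronglyMeasurable_mk
  have hg' : MemLp (hg.1.mk g) 2 μ := hg.ae_eq hg.1.ae_eq_mk
  have hgi := hg'.integrable one_le_two
  refine ⟨expKernelOp μ W (hg.1.mk g), integrable_expKernelOp hW hWS hgm hgi,
    memLp_uncurry_expKernelOp hW hWS hgm hg' T, ?_⟩
  filter_upwards [Measure.quasiMeasurePreserving_fst.ae (ae_restrict_mem measurableSet_Icc),
    Measure.quasiMeasurePreserving_snd.ae hg.1.ae_eq_mk] with p hp hgp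
  rw [hgp]
  exact expKernelOp_eq_add_setIntegral hW hWS hgm hgi hp.1 p.2

lemma ae_integrable_kernelOp_slice {Y : Type*} [MeasurableSpace Y] {ν : Measure Y} [SFinite ν]
    {v : Y → X → ℝ} (hv : Integrable (Function.uncurry v) (ν.prod μ)) :
    ∀ᵐ x ∂μ, Integrable (fun s => kernelOp μ W (v s) x) ν := by
  filter_upwards [hv.prod_left_ae] with x hx
  have hmeas : AEStronglyMeasurable (fun s => kernelOp μ W (v s) x) ν :=
    AEStronglyMeasurable.integral_prod_right'
      (f := fun q : Y × X => W x q.2 * (v q.1 q.2 - v q.1 x))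
      (((hW.comp_measurable measurable_prodMk_left).aestronglyMeasurable.comp_snd).mul
        (hv.1.sub hx.1.comp_fst))
  have hbound : Integrable (fun s => S * ((∫ y, ‖v s y‖ ∂μ) + μ.real univ * ‖v s x‖)) ν :=
    (hv.integral_norm_prod_left.add (hx.norm.const_mul _)).const_mul S
  refine hbound.mono' hmeas ?_
  filter_upwards [hv.prod_right_ae] with s hs
  exact norm_kernelOp_le hW hWS hs x

variable {T : ℝ}

lemma ae_sub_eq_setIntegral_kernelOp_sub {g : X → ℝ} {u v : ℝ → X → ℝ}
    (hu : Integrable (Function.uncurry u) ((volume.restrict (Icc 0 T)).prod μ))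
    (hv : Integrable (Function.uncurry v) ((volume.restrict (Icc 0 T)).prod μ))
    (hueq : ∀ᵐ p ∂(volume.restrict (Icc 0 T)).prod μ,
      u p.1 p.2 = g p.2 + ∫ s in Ioc 0 p.1, kernelOp μ W (u s) p.2)
    (hveq : ∀ᵐ p ∂(volume.restrict (Icc 0 T)).prod μ,
      v p.1 p.2 = g p.2 + ∫ s in Ioc 0 p.1, kernelOp μ W (v s) p.2) :
    ∀ᵐ p ∂(volume.restrict (Icc 0 T)).prod μ,
      v p.1 p.2 - u p.1 p.2 = ∫ s in Ioc 0 p.1, kernelOp μ W (v s - u s) p.2 := by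
  have hslices : ∀ᵐ s ∂volume.restrict (Icc 0 T), Integrable (v s) μ ∧ Integrable (u s) μ :=
    hv.prod_right_ae.and hu.prod_right_ae
  filter_upwards [hueq, hveq,
    Measure.quasiMeasurePreserving_fst.ae (ae_restrict_mem measurableSet_Icc),
    Measure.quasiMeasurePreserving_snd.ae
      ((ae_integrable_kernelOp_slice hW hWS hv).and (ae_integrable_kernelOp_slice hW hWS hu))]
    with p hup hvp hp hint
  have hsub : Ioc 0 p.1 ⊆ Icc 0 T := fun s hs => ⟨hs.1.le, hs.2.trans hp.2⟩
  rw [hvp, hup, add_sub_add_left_eq_sub,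
    ← integral_sub (hint.1.mono_measure (Measure.restrict_mono hsub le_rfl))
      (hint.2.mono_measure (Measure.restrict_mono hsub le_rfl))]
  refine integral_congr_ae ?_
  filter_upwards [ae_restrict_of_ae_restrict_of_subset hsub hslices] with s hs
  exact (kernelOp_sub hW hWS hs.1 hs.2 p.2).symm

lemma ae_norm_le_setIntegral_of_eq_setIntegral_kernelOp {w : ℝ → X → ℝ}
    (hw : Integrable (Function.uncurry w) ((volume.restrict (Icc 0 T)).prod μ))
    (hweq : ∀ᵐ p ∂(volume.restrict (Icc 0 T)).prod μ,
      w p.1 p.2 = ∫ s in Ioc 0 p.1, kernelOp μ W (w s) p.2) :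
    ∀ᵐ p ∂(volume.restrict (Icc 0 T)).prod μ, ‖w p.1 p.2‖
      ≤ ∫ s in Ioc 0 p.1, S * ((∫ x, ‖w s x‖ ∂μ) + μ.real univ * ‖w s p.2‖) := by
  filter_upwards [hweq, Measure.quasiMeasurePreserving_fst.ae (ae_restrict_mem measurableSet_Icc),
    Measure.quasiMeasurePreserving_snd.ae hw.prod_left_ae] with p hwp hp hint
  have hsub : Ioc 0 p.1 ⊆ Icc 0 T := fun s hs => ⟨hs.1.le, hs.2.trans hp.2⟩
  have hbound : Integrable (fun s => S * ((∫ x, ‖w s x‖ ∂μ) + μ.real univ * ‖w s p.2‖))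
      (volume.restrict (Icc 0 T)) :=
    (hw.integral_norm_prod_left.add (hint.norm.const_mul _)).const_mul S
  rw [hwp]
  refine norm_integral_le_of_norm_le (hbound.mono_measure (Measure.restrict_mono hsub le_rfl)) ?_
  filter_upwards [ae_restrict_of_ae_restrict_of_subset hsub hw.prod_right_ae] with s hs
  exact norm_kernelOp_le hW hWS hs p.2

lemma ae_integral_norm_le_of_eq_setIntegral_kernelOp {w : ℝ → X → ℝ}
    (hw : Integrable (Function.uncurry w) ((volume.restrict (Icc 0 T)).prod μ))
    (hweq : ∀ᵐ p ∂(volume.restrict (Icc 0 T)).prod μ,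
      w p.1 p.2 = ∫ s in Ioc 0 p.1, kernelOp μ W (w s) p.2) :
    ∀ᵐ t ∂volume.restrict (Icc 0 T), ∫ x, ‖w t x‖ ∂μ
      ≤ 2 * S * μ.real univ * ∫ s in Ioc 0 t, ∫ x, ‖w s x‖ ∂μ := by
  set ψ : ℝ → ℝ := fun s => ∫ x, ‖w s x‖ ∂μ
  filter_upwards [Measure.ae_ae_of_ae_prod
      (ae_norm_le_setIntegral_of_eq_setIntegral_kernelOp hW hWS hw hweq),
    ae_restrict_mem measurableSet_Icc, hw.prod_right_ae] with t ht htT hwt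
  have hsub : Ioc 0 t ⊆ Icc 0 T := fun s hs => ⟨hs.1.le, hs.2.trans htT.2⟩
  have hF : Integrable (fun q : ℝ × X => S * (ψ q.1 + μ.real univ * ‖w q.1 q.2‖))
      ((volume.restrict (Ioc 0 t)).prod μ) :=
    (((hw.integral_norm_prod_left.comp_fst μ).add (hw.norm.const_mul _)).const_mul S).mono_measure
      (Measure.prod_mono (Measure.restrict_mono hsub le_rfl) le_rfl)
  calc ψ t ≤ ∫ x, (∫ s in Ioc 0 t, S * (ψ s + μ.real univ * ‖w s x‖)) ∂μ :=
        integral_mono_ae hwt.norm hF.swap.integral_prod_left ht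
    _ = ∫ s in Ioc 0 t, ∫ x, S * (ψ s + μ.real univ * ‖w s x‖) ∂μ :=
        integral_integral_swap (f := fun x s => S * (ψ s + μ.real univ * ‖w s x‖)) hF.swap
    _ = ∫ s in Ioc 0 t, 2 * S * μ.real univ * ψ s := by
        refine integral_congr_ae ?_
        filter_upwards [ae_restrict_of_ae_restrict_of_subset hsub hw.prod_right_ae] with s hs
        have hs' : Integrable (fun x => μ.real univ * ‖w s x‖) μ := hs.norm.const_mul _
        rw [integral_const_mul, integral_add (integrable_const _) hs',
          integral_const, integral_const_mul, smul_eq_mul]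
        ring
    _ = 2 * S * μ.real univ * ∫ s in Ioc 0 t, ψ s := integral_const_mul _ _

theorem ae_eq_of_eq_add_setIntegral_kernelOp {g : X → ℝ} {u v : ℝ → X → ℝ}
    (hu : Integrable (Function.uncurry u) ((volume.restrict (Icc 0 T)).prod μ))
    (hv : Integrable (Function.uncurry v) ((volume.restrict (Icc 0 T)).prod μ))
    (hueq : ∀ᵐ p ∂(volume.restrict (Icc 0 T)).prod μ,
      u p.1 p.2 = g p.2 + ∫ s in Ioc 0 p.1, kernelOp μ W (u s) p.2)
    (hveq : ∀ᵐ p ∂(volume.restrict (Icc 0 T)).prod μ,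
      v p.1 p.2 = g p.2 + ∫ s in Ioc 0 p.1, kernelOp μ W (v s) p.2) :
    ∀ᵐ p ∂(volume.restrict (Icc 0 T)).prod μ, v p.1 p.2 = u p.1 p.2 := by
  have hw : Integrable (Function.uncurry (v - u)) ((volume.restrict (Icc 0 T)).prod μ) :=
    hv.sub hu
  have hψ := ae_eq_zero_of_le_mul_setIntegral (fun t => integral_nonneg fun x => norm_nonneg _)
    hw.integral_norm_prod_left (ae_integral_norm_le_of_eq_setIntegral_kernelOp hW hWS hw
      (ae_sub_eq_setIntegral_kernelOp_sub hW hWS hu hv hueq hveq))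
  have hzero : ∫ p, ‖Function.uncurry (v - u) p‖ ∂(volume.restrict (Icc 0 T)).prod μ = 0 := by
    rw [integral_prod _ hw.norm]
    exact integral_eq_zero_of_ae hψ
  filter_upwards [(integral_eq_zero_iff_of_nonneg (fun _ => norm_nonneg _) hw.norm).1 hzero]
    with p hp
  exact sub_eq_zero.1 (norm_eq_zero.1 hp)

end IntegralEquation

section PartitionKernel

lemma norm_chi_le_one {α : Type*} (A : Set α) (x : α) : ‖chi A x‖ ≤ 1 := by
  unfold chi
  split_ifs <;> simp

lemma measurable_chi {α : Type*} [MeasurableSpace α] {A : Set α} (hA : MeasurableSet A) :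
    Measurable (chi A) := by
  have : chi A = A.indicator 1 := by
    ext x
    by_cases h : x ∈ A <;> simp [chi, h]
  rw [this]
  exact measurable_one.indicator hA

lemma norm_chi_mul_chi_mul_le {α : Type*} (A B : Set α) (x y : α) (v : ℝ) :
    ‖chi A x * chi B y * v‖ ≤ ‖v‖ := by
  rw [norm_mul, norm_mul]
  exact mul_le_of_le_one_left (norm_nonneg v)
    (mul_le_one₀ (norm_chi_le_one A x) (norm_nonneg _) (norm_chi_le_one B y))

variable {N : ℕ} {Ω A B : Set (Fin N → ℝ)} {J G R : (Fin N → ℝ) → (Fin N → ℝ) → ℝ}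

/-- Cut off outside `Ω × Ω`, where its values do not matter, so that it is bounded. -/
noncomputable def partitionKernel (Ω A B : Set (Fin N → ℝ))
    (J G R : (Fin N → ℝ) → (Fin N → ℝ) → ℝ) (x y : Fin N → ℝ) : ℝ :=
  (Ω ×ˢ Ω).indicator (fun p => chi A p.1 * chi A p.2 * J p.1 p.2
    + chi B p.1 * chi B p.2 * G p.1 p.2 + chi A p.1 * chi B p.2 * R p.1 p.2
    + chi B p.1 * chi A p.2 * R p.1 p.2) (x, y)

lemma stronglyMeasurable_partitionKernel (hΩ : MeasurableSet Ω) (hA : MeasurableSet A)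
    (hB : MeasurableSet B) (hJ : Continuous (Function.uncurry J))
    (hG : Continuous (Function.uncurry G)) (hR : Continuous (Function.uncurry R)) :
    StronglyMeasurable (Function.uncurry (partitionKernel Ω A B J G R)) := by
  have hχA := measurable_chi hA
  have hχB := measurable_chi hB
  have hJm := hJ.measurable
  have hGm := hG.measurable
  have hRm := hR.measurable
  refine Measurable.stronglyMeasurable (Measurable.indicator ?_ (hΩ.prod hΩ))
  fun_prop

lemma exists_norm_partitionKernel_le (hΩ : IsBounded Ω) (hJ : Continuous (Function.uncurry J))
    (hG : Continuous (Function.uncurry G)) (hR : Continuous (Function.uncurry R)) :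
    ∃ S, ∀ x y, ‖partitionKernel Ω A B J G R x y‖ ≤ S := by
  obtain ⟨C, hC⟩ := (hΩ.isCompact_closure.prod hΩ.isCompact_closure).exists_bound_of_continuousOn
    (f := fun p => ‖J p.1 p.2‖ + ‖G p.1 p.2‖ + ‖R p.1 p.2‖ + ‖R p.1 p.2‖)
    (by fun_prop : Continuous _).continuousOn
  refine ⟨max C 0, fun x y => ?_⟩
  unfold partitionKernel
  by_cases h : (x, y) ∈ Ω ×ˢ Ω
  · rw [indicator_of_mem h]
    calc _ ≤ ‖J x y‖ + ‖G x y‖ + ‖R x y‖ + ‖R x y‖ :=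
          norm_add₄_le.trans (by gcongr <;> exact norm_chi_mul_chi_mul_le _ _ _ _ _)
      _ ≤ C := (Real.le_norm_self _).trans (hC (x, y) ⟨subset_closure h.1, subset_closure h.2⟩)
      _ ≤ max C 0 := le_max_left _ _
  · rw [indicator_of_notMem h, norm_zero]
    exact le_max_right _ _

lemma integrable_chi_mul_mul_sub (hΩ : MeasurableSet Ω) (hΩb : IsBounded Ω) (hA : MeasurableSet A)
    (hJ : Continuous (Function.uncurry J)) {f : (Fin N → ℝ) → ℝ}
    (hf : Integrable f (volume.restrict Ω)) (x : Fin N → ℝ) :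
    Integrable (fun y => chi A y * J x y * (f y - f x)) (volume.restrict Ω) := by
  have : IsFiniteMeasure (volume.restrict Ω) := isFiniteMeasure_restrict.2 hΩb.measure_lt_top.ne
  have hJx : Continuous (J x) := hJ.comp (Continuous.prodMk_right x)
  obtain ⟨C, hC⟩ := hΩb.isCompact_closure.exists_bound_of_continuousOn hJx.continuousOn
  refine (hf.sub (integrable_const (f x))).bdd_mul (c := C)
    ((measurable_chi hA).mul hJx.measurable).aestronglyMeasurable ?_
  filter_upwards [ae_restrict_mem hΩ] with y hy
  rw [norm_mul]
  exact (mul_le_of_le_one_left (norm_nonneg _) (norm_chi_le_one A y)).trans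
    (hC y (subset_closure hy))

lemma Lop_eq_kernelOp (hΩ : MeasurableSet Ω) (hΩb : IsBounded Ω) (hA : MeasurableSet A)
    (hB : MeasurableSet B) (hJ : Continuous (Function.uncurry J))
    (hG : Continuous (Function.uncurry G)) (hR : Continuous (Function.uncurry R))
    {f : (Fin N → ℝ) → ℝ} (hf : Integrable f (volume.restrict Ω)) {x : Fin N → ℝ} (hx : x ∈ Ω) :
    Lop Ω A B J G R f x = kernelOp (volume.restrict Ω) (partitionKernel Ω A B J G R) f x := by
  have hsplit : ∀ᵐ y ∂volume.restrict Ω, partitionKernel Ω A B J G R x y * (f y - f x)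
      = chi A x * (chi A y * J x y * (f y - f x)) + chi B x * (chi B y * G x y * (f y - f x))
        + chi A x * (chi B y * R x y * (f y - f x))
        + chi B x * (chi A y * R x y * (f y - f x)) := by
    filter_upwards [ae_restrict_mem hΩ] with y hy
    rw [partitionKernel, indicator_of_mem (mk_mem_prod hx hy)]
    ring
  have hJ' := (integrable_chi_mul_mul_sub hΩ hΩb hA hJ hf x).const_mul (chi A x)
  have hG' := (integrable_chi_mul_mul_sub hΩ hΩb hB hG hf x).const_mul (chi B x)
  have hRA := (integrable_chi_mul_mul_sub hΩ hΩb hB hR hf x).const_mul (chi A x)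
  have hRB := (integrable_chi_mul_mul_sub hΩ hΩb hA hR hf x).const_mul (chi B x)
  rw [kernelOp, integral_congr_ae hsplit, integral_add ((hJ'.fun_add hG').fun_add hRA) hRB,
    integral_add (hJ'.fun_add hG') hRA, integral_add hJ' hG', integral_const_mul,
    integral_const_mul, integral_const_mul, integral_const_mul, Lop]

lemma ae_setIntegral_Lop_eq_setIntegral_kernelOp (hΩ : MeasurableSet Ω) (hΩb : IsBounded Ω)
    (hA : MeasurableSet A) (hB : MeasurableSet B) (hJ : Continuous (Function.uncurry J))
    (hG : Continuous (Function.uncurry G)) (hR : Continuous (Function.uncurry R)) {T : ℝ}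
    {v : ℝ → (Fin N → ℝ) → ℝ}
    (hv : ∀ᵐ s ∂volume.restrict (Icc 0 T), Integrable (v s) (volume.restrict Ω)) :
    ∀ᵐ p ∂(volume.restrict (Icc 0 T)).prod (volume.restrict Ω),
      ∫ s in Ioc 0 p.1, Lop Ω A B J G R (v s) p.2
        = ∫ s in Ioc 0 p.1,
            kernelOp (volume.restrict Ω) (partitionKernel Ω A B J G R) (v s) p.2 := by
  filter_upwards [Measure.quasiMeasurePreserving_fst.ae (ae_restrict_mem measurableSet_Icc),
    Measure.quasiMeasurePreserving_snd.ae (ae_restrict_mem hΩ)] with p hp hpΩ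
  have hsub : Ioc 0 p.1 ⊆ Icc 0 T := fun s hs => ⟨hs.1.le, hs.2.trans hp.2⟩
  refine integral_congr_ae ?_
  filter_upwards [ae_restrict_of_ae_restrict_of_subset hsub hv] with s hs
  exact Lop_eq_kernelOp hΩ hΩb hA hB hJ hG hR hs hpΩ

end PartitionKernel

theorem stmt3_general {N : ℕ} (Ω : Set (Fin N → ℝ))
    (hΩo : IsOpen Ω) (hΩb : IsBounded Ω)
    (J G R : (Fin N → ℝ) → (Fin N → ℝ) → ℝ)
    (hJ : KernelH J) (hG : KernelH G) (hR : KernelH R)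
    (A B : Set (Fin N → ℝ))
    (hBopen : IsOpen B) (hAmeas : MeasurableSet A)
    (u0 : (Fin N → ℝ) → ℝ) (hu0 : MemLp u0 2 (volume.restrict Ω))
    (T : ℝ) :
    ∃ u : ℝ → (Fin N → ℝ) → ℝ,
      MemLp (fun p : ℝ × (Fin N → ℝ) => u p.1 p.2) 2 (((volume : Measure ℝ).restrict (Set.Icc 0 T)).prod (volume.restrict Ω)) ∧
      (∀ᵐ p ∂(((volume : Measure ℝ).restrict (Set.Icc 0 T)).prod (volume.restrict Ω)),
        u p.1 p.2 = u0 p.2 + ∫ s in Set.Ioc (0 : ℝ) p.1, Lop Ω A B J G R (u s) p.2) ∧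
      ∀ v : ℝ → (Fin N → ℝ) → ℝ,
        MemLp (fun p : ℝ × (Fin N → ℝ) => v p.1 p.2) 2 (((volume : Measure ℝ).restrict (Set.Icc 0 T)).prod (volume.restrict Ω)) →
        (∀ᵐ p ∂(((volume : Measure ℝ).restrict (Set.Icc 0 T)).prod (volume.restrict Ω)),
          v p.1 p.2 = u0 p.2 + ∫ s in Set.Ioc (0 : ℝ) p.1, Lop Ω A B J G R (v s) p.2) →
        (∀ᵐ p ∂(((volume : Measure ℝ).restrict (Set.Icc 0 T)).prod (volume.restrict Ω)), v p.1 p.2 = u p.1 p.2) := by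
  have hΩ := hΩo.measurableSet
  have : IsFiniteMeasure (volume.restrict Ω) := isFiniteMeasure_restrict.2 hΩb.measure_lt_top.ne
  obtain ⟨S, hWS⟩ := exists_norm_partitionKernel_le (A := A) (B := B) hΩb hJ.1 hG.1 hR.1
  have hW := stronglyMeasurable_partitionKernel hΩ hAmeas hBopen.measurableSet hJ.1 hG.1 hR.1
  have hLop := fun v => ae_setIntegral_Lop_eq_setIntegral_kernelOp (T := T) (v := v) hΩ hΩb
    hAmeas hBopen.measurableSet hJ.1 hG.1 hR.1
  obtain ⟨u, hui, hu, hueq⟩ := exists_solution_kernelOp hW hWS hu0 T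
  refine ⟨u, hu, ?_, fun v hv hveq => ?_⟩
  · filter_upwards [hueq, hLop u (ae_of_all _ hui)] with p hup hLp
    rwa [hLp]
  · refine ae_eq_of_eq_add_setIntegral_kernelOp hW hWS (hu.integrable one_le_two)
      (hv.integrable one_le_two) hueq ?_
    filter_upwards [hveq, hLop v (hv.integrable one_le_two).prod_right_ae] with p hvp hLp
    rwa [← hLp]

theorem stmt3 {N : ℕ} (Ω : Set (Fin N → ℝ))
    (hΩo : IsOpen Ω) (hΩb : IsBounded Ω) (hΩc : IsConnected Ω)
    (J G R : (Fin N → ℝ) → (Fin N → ℝ) → ℝ)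
    (hJ : KernelH J) (hG : KernelH G) (hR : KernelH R)
    (A B : Set (Fin N → ℝ))
    (hpart : closure Ω = A ∪ B) (hdisj : A ∩ B = ∅)
    (hBopen : IsOpen B) (hAmeas : MeasurableSet A)
    (u0 : (Fin N → ℝ) → ℝ) (hu0 : MemLp u0 2 (volume.restrict Ω))
    (T : ℝ) (hT : 0 < T) :
    ∃ u : ℝ → (Fin N → ℝ) → ℝ,
      MemLp (fun p : ℝ × (Fin N → ℝ) => u p.1 p.2) 2 (((volume : Measure ℝ).restrict (Set.Icc 0 T)).prod (volume.restrict Ω)) ∧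
      (∀ᵐ p ∂(((volume : Measure ℝ).restrict (Set.Icc 0 T)).prod (volume.restrict Ω)),
        u p.1 p.2 = u0 p.2 + ∫ s in Set.Ioc (0 : ℝ) p.1, Lop Ω A B J G R (u s) p.2) ∧
      ∀ v : ℝ → (Fin N → ℝ) → ℝ,
        MemLp (fun p : ℝ × (Fin N → ℝ) => v p.1 p.2) 2 (((volume : Measure ℝ).restrict (Set.Icc 0 T)).prod (volume.restrict Ω)) →
        (∀ᵐ p ∂(((volume : Measure ℝ).restrict (Set.Icc 0 T)).prod (volume.restrict Ω)),
          v p.1 p.2 = u0 p.2 + ∫ s in Set.Ioc (0 : ℝ) p.1, Lop Ω A B J G R (v s) p.2) →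
        (∀ᵐ p ∂(((volume : Measure ℝ).restrict (Set.Icc 0 T)).prod (volume.restrict Ω)), v p.1 p.2 = u p.1 p.2) :=
  stmt3_general Ω hΩo hΩb J G R hJ hG hR A B hBopen hAmeas u0 hu0 T
end

section
/- Fix T > 0 and initial data a_0, b_0 ∈ L²(Ω). The limit system ∂_t a(t,x) = ∫_Ω J(x,y)(X(x)a(t,y) − X(y)a(t,x)) dy + ∫_Ω R(x,y)(X(x)b(t,y) − (1−X(y))a(t,x)) dy, ∂_t b(t,x) = ∫_Ω G(x,y)((1−X(x))b(t,y) − (1−X(y))b(t,x)) dy + ∫_Ω R(x,y)((1−X(x))a(t,y) − X(y)b(t,x)) dy, with a(0,·) = a_0 and b(0,·) = b_0, has at most one solution pair (a,b) in L²((0,T) × Ω) × L²((0,T) × Ω). -/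
open MeasureTheory Set Filter Topology Bornology

open Real

/-!
For fixed `x ∈ Ω` the differences `u = a - a'`, `v = b - b'` of two solutions satisfy
`|∂ₜu(t,x)| ≤ K W(t) + 2K|Ω| |u(t,x)|` (likewise for `v`), where `K` bounds the kernels on
`Ω × Ω` and `W(t) = ∫_Ω (|u(t,·)| + |v(t,·)|)`, because `0 < X < 1`. Grönwall's inequality in
`t` at fixed `x` gives `|u(τ,x)|, |v(τ,x)| ≤ K e^{2K|Ω|T} ∫₀^τ W`, uniformly in `x`.
Integrating over `Ω` yields `W(τ) ≤ L ∫₀^τ W`, so a second Grönwall argument gives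
`∫₀^T W = 0`, i.e. `u = v = 0` almost everywhere.
-/

theorem le_mul_exp_of_le_add_mul_integral {h : ℝ → ℝ} {a b A C : ℝ} (hab : a ≤ b) (hC : 0 ≤ C)
    (hh : ContinuousOn h (Icc a b)) (hle : ∀ t ∈ Icc a b, h t ≤ A + C * ∫ s in a..t, h s) :
    ∀ t ∈ Icc a b, h t ≤ A * exp (C * (t - a)) := by
  set g : ℝ → ℝ := fun t => h (projIcc a b hab t)
  have hg : Continuous g := hh.comp_continuous (continuous_subtype_val.comp continuous_projIcc)
    fun t => (projIcc a b hab t).2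
  have hgh : ∀ t ∈ Icc a b, g t = h t := fun t ht => by simp [g, projIcc_of_mem hab ht]
  have hint : ∀ t ∈ Icc a b, ∫ s in a..t, g s = ∫ s in a..t, h s := fun t ht =>
    intervalIntegral.integral_congr fun s hs =>
      hgh s (by rw [uIcc_of_le ht.1] at hs; exact ⟨hs.1, hs.2.trans ht.2⟩)
  -- `H` dominates `h` and satisfies `H' = C g ≤ C H`
  set H : ℝ → ℝ := fun t => A + C * ∫ s in a..t, g s
  have hH : ∀ t, HasDerivAt H (C * g t) t := fun t =>
    ((hg.integral_hasStrictDerivAt a t).hasDerivAt.const_mul C).const_add A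
  have hHh : ∀ t ∈ Icc a b, h t ≤ H t := fun t ht => by simpa only [H, hint t ht] using hle t ht
  have bound := le_gronwallBound_of_liminf_deriv_right_le (f := H) (δ := A) (a := a) (b := b)
    (ε := 0)
    (fun t _ => (hH t).continuousAt.continuousWithinAt)
    (fun t _ r hr => (hH t).hasDerivWithinAt.liminf_right_slope_le hr)
    (by simp [H]) fun t ht => by
      rw [add_zero, hgh t (Ico_subset_Icc_self ht)]
      exact mul_le_mul_of_nonneg_left (hHh t (Ico_subset_Icc_self ht)) hC
  intro t ht
  calc h t ≤ H t := hHh t ht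
    _ ≤ gronwallBound A C 0 (t - a) := bound t ht
    _ = A * exp (C * (t - a)) := gronwallBound_ε0 _ _ _

theorem abs_sub_le_integral_of_ae_abs_deriv_le {f f' φ : ℝ → ℝ} {a b : ℝ} (hab : a ≤ b)
    (hf : ∀ t ∈ Icc a b, HasDerivWithinAt f (f' t) (Icc a b) t)
    (hφ : IntegrableOn φ (Icc a b)) (hbound : ∀ᵐ t ∂volume.restrict (Ioo a b), |f' t| ≤ φ t) :
    |f b - f a| ≤ ∫ t in a..b, φ t := by
  -- `ψ` agrees with `φ` a.e. but dominates `|f'|` everywhere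
  set ψ : ℝ → ℝ := fun t => max |f' t| (φ t)
  have hψφ : ψ =ᵐ[volume.restrict (Icc a b)] φ := by
    rw [← Measure.restrict_congr_set Ioo_ae_eq_Icc]
    filter_upwards [hbound] with t ht using max_eq_right ht
  have hψ : IntegrableOn ψ (Icc a b) := hφ.congr_fun_ae hψφ.symm
  have hint : ∫ t in a..b, ψ t = ∫ t in a..b, φ t := by
    rw [intervalIntegral.integral_of_le hab, intervalIntegral.integral_of_le hab,
      Measure.restrict_congr_set Ioc_ae_eq_Icc]
    exact integral_congr_ae hψφ
  have hcont : ContinuousOn f (Icc a b) := fun t ht => (hf t ht).continuousWithinAt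
  have hderiv : ∀ t ∈ Ioo a b, HasDerivAt f (f' t) t := fun t ht =>
    (hf t (Ioo_subset_Icc_self ht)).hasDerivAt (Icc_mem_nhds ht.1 ht.2)
  have hup := intervalIntegral.sub_le_integral_of_hasDeriv_right_of_le hab hcont
    (fun t ht => (hderiv t ht).hasDerivWithinAt) hψ
    fun t _ => (le_abs_self _).trans (le_max_left _ _)
  have hdown := intervalIntegral.sub_le_integral_of_hasDeriv_right_of_le hab hcont.neg
    (fun t ht => (hderiv t ht).neg.hasDerivWithinAt) hψ
    fun t _ => (neg_le_abs _).trans (le_max_left _ _)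
  simp only [Pi.neg_apply] at hdown
  rw [← hint, abs_sub_le_iff]
  exact ⟨hup, by linarith⟩

theorem abs_le_mul_exp_mul_integral_of_abs_deriv_le {w w' W : ℝ → ℝ} {T K C : ℝ}
    (hK : 0 ≤ K) (hC : 0 ≤ C)
    (hw : ∀ t ∈ Icc 0 T, HasDerivWithinAt w (w' t) (Icc 0 T) t) (hw0 : w 0 = 0)
    (hW : IntegrableOn W (Ioo 0 T)) (hW0 : 0 ≤ W)
    (hbound : ∀ᵐ t ∂volume.restrict (Ioo 0 T), |w' t| ≤ K * W t + C * |w t|) :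
    ∀ τ ∈ Icc 0 T, |w τ| ≤ K * exp (C * T) * ∫ t in 0..τ, W t := by
  have hcont : ContinuousOn w (Icc 0 T) := fun t ht => (hw t ht).continuousWithinAt
  rw [← integrableOn_Icc_iff_integrableOn_Ioo] at hW
  have hWii : ∀ t ∈ Icc 0 T, IntervalIntegrable W volume 0 t := fun t ht =>
    (intervalIntegrable_iff_integrableOn_Icc_of_le ht.1).2
      (hW.mono_set (Icc_subset_Icc le_rfl ht.2))
  have hwii : ∀ t ∈ Icc 0 T, IntervalIntegrable (fun s => |w s|) volume 0 t := fun t ht =>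
    (hcont.mono (Icc_subset_Icc le_rfl ht.2)).abs.intervalIntegrable_of_Icc ht.1
  intro τ hτ
  have hle : ∀ t ∈ Icc 0 τ, |w t| ≤ K * (∫ s in 0..τ, W s) + C * ∫ s in 0..t, |w s| := by
    intro t ht
    have htT : t ∈ Icc 0 T := ⟨ht.1, ht.2.trans hτ.2⟩
    calc |w t| = |w t - w 0| := by rw [hw0, sub_zero]
      _ ≤ ∫ s in 0..t, (K * W s + C * |w s|) :=
        abs_sub_le_integral_of_ae_abs_deriv_le ht.1
          (fun s hs => (hw s ⟨hs.1, hs.2.trans htT.2⟩).mono (Icc_subset_Icc le_rfl htT.2))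
          ((intervalIntegrable_iff_integrableOn_Icc_of_le ht.1).1
            (((hWii t htT).const_mul K).add ((hwii t htT).const_mul C)))
          (ae_restrict_of_ae_restrict_of_subset (Ioo_subset_Ioo le_rfl htT.2) hbound)
      _ = K * (∫ s in 0..t, W s) + C * ∫ s in 0..t, |w s| := by
        rw [intervalIntegral.integral_add ((hWii t htT).const_mul K) ((hwii t htT).const_mul C),
          intervalIntegral.integral_const_mul, intervalIntegral.integral_const_mul]
      _ ≤ K * (∫ s in 0..τ, W s) + C * ∫ s in 0..t, |w s| := by
        gcongr
        exact intervalIntegral.integral_mono_interval le_rfl ht.1 ht.2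
          (Eventually.of_forall hW0) (hWii τ hτ)
  have hgron := le_mul_exp_of_le_add_mul_integral hτ.1 hC
    (hcont.mono (Icc_subset_Icc le_rfl hτ.2)).abs hle τ ⟨hτ.1, le_rfl⟩
  have hWτ : 0 ≤ ∫ s in 0..τ, W s := intervalIntegral.integral_nonneg hτ.1 fun s _ => hW0 s
  calc |w τ| ≤ K * (∫ s in 0..τ, W s) * exp (C * (τ - 0)) := hgron
    _ ≤ K * (∫ s in 0..τ, W s) * exp (C * T) := by gcongr; linarith [hτ.2]
    _ = K * exp (C * T) * ∫ t in 0..τ, W t := by ring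

theorem integral_nonpos_of_le_mul_integral {W : ℝ → ℝ} {T L : ℝ} (hT : 0 ≤ T) (hL : 0 ≤ L)
    (hW : IntegrableOn W (Icc 0 T)) (hle : ∀ s ∈ Icc 0 T, W s ≤ L * ∫ r in 0..s, W r) :
    ∫ s in 0..T, W s ≤ 0 := by
  set Φ : ℝ → ℝ := fun t => ∫ s in 0..t, W s
  have hΦ : ContinuousOn Φ (Icc 0 T) := by
    have := intervalIntegral.continuousOn_primitive_interval (a := 0) (b := T) (f := W)
      (by rwa [uIcc_of_le hT])
    rwa [uIcc_of_le hT] at this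
  have hΦle : ∀ t ∈ Icc 0 T, Φ t ≤ 0 + L * ∫ s in 0..t, Φ s := by
    intro t ht
    have hsub : Icc 0 t ⊆ Icc 0 T := Icc_subset_Icc le_rfl ht.2
    rw [zero_add, ← intervalIntegral.integral_const_mul]
    exact intervalIntegral.integral_mono_on ht.1
      ((intervalIntegrable_iff_integrableOn_Icc_of_le ht.1).2 (hW.mono_set hsub))
      (((hΦ.mono hsub).intervalIntegrable_of_Icc ht.1).const_mul L)
      fun s hs => hle s (hsub hs)
  simpa using le_mul_exp_of_le_add_mul_integral hT hL hΦ hΦle T ⟨hT, le_rfl⟩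

section

variable {α : Type*} [MeasurableSpace α] {μ : Measure α} [IsFiniteMeasure μ]

theorem ae_eq_zero_of_le_mul_integral_integral {T L : ℝ} (hT : 0 ≤ T) (hL : 0 ≤ L)
    {U : ℝ × α → ℝ} (hU0 : 0 ≤ U) (hU : Integrable U ((volume.restrict (Ioo 0 T)).prod μ))
    (hle : ∀ τ ∈ Icc 0 T, ∀ᵐ y ∂μ, U (τ, y) ≤ L * ∫ s in 0..τ, ∫ y, U (s, y) ∂μ) :
    U =ᵐ[(volume.restrict (Ioo 0 T)).prod μ] 0 := by
  set W : ℝ → ℝ := fun s => ∫ y, U (s, y) ∂μ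
  have hW : IntegrableOn W (Icc 0 T) :=
    (integrableOn_Icc_iff_integrableOn_Ioo).2 hU.integral_prod_left
  have hWle : ∀ s ∈ Icc 0 T, W s ≤ L * μ.real univ * ∫ r in 0..s, W r := fun s hs =>
    calc W s ≤ ∫ _ : α, L * (∫ r in 0..s, W r) ∂μ :=
          integral_mono_of_nonneg (Eventually.of_forall fun y => hU0 (s, y))
            (integrable_const _) (hle s hs)
      _ = L * μ.real univ * ∫ r in 0..s, W r := by rw [integral_const, smul_eq_mul]; ring
  have hWT : ∫ s in 0..T, W s ≤ 0 :=
    integral_nonpos_of_le_mul_integral hT (mul_nonneg hL measureReal_nonneg) hW hWle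
  have hUint : ∫ p, U p ∂(volume.restrict (Ioo 0 T)).prod μ = ∫ s in 0..T, W s := by
    rw [integral_prod U hU, intervalIntegral.integral_of_le hT,
      Measure.restrict_congr_set Ioo_ae_eq_Ioc]
  refine (integral_eq_zero_iff_of_nonneg hU0 hU).1 (le_antisymm ?_ (integral_nonneg hU0))
  exact hUint ▸ hWT

variable {k d : α → ℝ} {K e : ℝ}

theorem integrable_mul_mul_sub_mul (hk : AEStronglyMeasurable k μ) (hkK : ∀ᵐ y ∂μ, |k y| ≤ K)
    (hd : AEStronglyMeasurable d μ) (hd1 : ∀ᵐ y ∂μ, |d y| ≤ 1) {f : α → ℝ} (hf : Integrable f μ)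
    (p : ℝ) : Integrable (fun y => k y * (e * f y - d y * p)) μ :=
  ((hf.const_mul e).sub ((integrable_const p).bdd_mul hd hd1)).bdd_mul hk hkK

theorem abs_integral_sub_integral_le (hk : AEStronglyMeasurable k μ) (hkK : ∀ᵐ y ∂μ, |k y| ≤ K)
    (hd : AEStronglyMeasurable d μ) (hd1 : ∀ᵐ y ∂μ, |d y| ≤ 1) (he : |e| ≤ 1)
    {f g : α → ℝ} (hf : Integrable f μ) (hg : Integrable g μ) (p q : ℝ) :
    |∫ y, k y * (e * f y - d y * p) ∂μ - ∫ y, k y * (e * g y - d y * q) ∂μ|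
      ≤ K * ∫ y, |f y - g y| ∂μ + K * μ.real univ * |p - q| := by
  have hfg : Integrable (fun y => |f y - g y|) μ := (hf.sub hg).abs
  rw [← integral_sub (integrable_mul_mul_sub_mul hk hkK hd hd1 hf p)
    (integrable_mul_mul_sub_mul hk hkK hd hd1 hg q)]
  calc |∫ y, k y * (e * f y - d y * p) - k y * (e * g y - d y * q) ∂μ|
      ≤ ∫ y, K * (|f y - g y| + |p - q|) ∂μ := by
        rw [← Real.norm_eq_abs]
        refine norm_integral_le_of_norm_le ((hfg.add (integrable_const _)).const_mul K) ?_
        filter_upwards [hkK, hd1] with y hky hdy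
        rw [Real.norm_eq_abs, ← mul_sub, abs_mul]
        refine mul_le_mul hky ?_ (abs_nonneg _) ((abs_nonneg _).trans hky)
        calc |e * f y - d y * p - (e * g y - d y * q)|
            = |e * (f y - g y) - d y * (p - q)| := by ring_nf
          _ ≤ |e| * |f y - g y| + |d y| * |p - q| := by
            rw [← abs_mul, ← abs_mul]; exact abs_sub _ _
          _ ≤ |f y - g y| + |p - q| := by
            gcongr <;> [exact mul_le_of_le_one_left (abs_nonneg _) he;
              exact mul_le_of_le_one_left (abs_nonneg _) hdy]
    _ = K * ∫ y, |f y - g y| ∂μ + K * μ.real univ * |p - q| := by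
        rw [integral_const_mul, integral_add hfg (integrable_const _), integral_const,
          smul_eq_mul]
        ring

variable {k₁ k₂ d₁ d₂ : α → ℝ}

theorem abs_sub_integral_add_integral_le
    (hk₁ : AEStronglyMeasurable k₁ μ) (hk₁K : ∀ᵐ y ∂μ, |k₁ y| ≤ K)
    (hk₂ : AEStronglyMeasurable k₂ μ) (hk₂K : ∀ᵐ y ∂μ, |k₂ y| ≤ K)
    (hd₁ : AEStronglyMeasurable d₁ μ) (hd₁1 : ∀ᵐ y ∂μ, |d₁ y| ≤ 1)
    (hd₂ : AEStronglyMeasurable d₂ μ) (hd₂1 : ∀ᵐ y ∂μ, |d₂ y| ≤ 1) (he : |e| ≤ 1)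
    {f f' g g' : α → ℝ} (hf : Integrable f μ) (hf' : Integrable f' μ)
    (hg : Integrable g μ) (hg' : Integrable g' μ) (p p' : ℝ) :
    |((∫ y, k₁ y * (e * f y - d₁ y * p) ∂μ) + ∫ y, k₂ y * (e * g y - d₂ y * p) ∂μ) -
        ((∫ y, k₁ y * (e * f' y - d₁ y * p') ∂μ) + ∫ y, k₂ y * (e * g' y - d₂ y * p') ∂μ)|
      ≤ K * ((∫ y, |f y - f' y| ∂μ) + ∫ y, |g y - g' y| ∂μ) + 2 * K * μ.real univ * |p - p'| := by
  have h₁ := abs_integral_sub_integral_le hk₁ hk₁K hd₁ hd₁1 he hf hf' p p'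
  have h₂ := abs_integral_sub_integral_le hk₂ hk₂K hd₂ hd₂1 he hg hg' p p'
  rw [add_sub_add_comm]
  exact (abs_add_le _ _).trans (by linarith)

theorem abs_sub_le_mul_integral_of_hasDerivWithinAt {T : ℝ} (hK : 0 ≤ K)
    (hk₁ : AEStronglyMeasurable k₁ μ) (hk₁K : ∀ᵐ y ∂μ, |k₁ y| ≤ K)
    (hk₂ : AEStronglyMeasurable k₂ μ) (hk₂K : ∀ᵐ y ∂μ, |k₂ y| ≤ K)
    (hd₁ : AEStronglyMeasurable d₁ μ) (hd₁1 : ∀ᵐ y ∂μ, |d₁ y| ≤ 1)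
    (hd₂ : AEStronglyMeasurable d₂ μ) (hd₂1 : ∀ᵐ y ∂μ, |d₂ y| ≤ 1) (he : |e| ≤ 1)
    {f f' g g' : ℝ → α → ℝ} {x : α} {W : ℝ → ℝ} (hW : IntegrableOn W (Ioo 0 T)) (hW0 : 0 ≤ W)
    (hslices : ∀ᵐ s ∂volume.restrict (Ioo 0 T), Integrable (f s) μ ∧ Integrable (f' s) μ ∧
      Integrable (g s) μ ∧ Integrable (g' s) μ ∧
      (∫ y, |f s y - f' s y| ∂μ) + ∫ y, |g s y - g' s y| ∂μ = W s)
    (hf : ∀ t ∈ Icc 0 T, HasDerivWithinAt (fun s => f s x)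
      ((∫ y, k₁ y * (e * f t y - d₁ y * f t x) ∂μ) + ∫ y, k₂ y * (e * g t y - d₂ y * f t x) ∂μ)
      (Icc 0 T) t)
    (hf' : ∀ t ∈ Icc 0 T, HasDerivWithinAt (fun s => f' s x)
      ((∫ y, k₁ y * (e * f' t y - d₁ y * f' t x) ∂μ) +
        ∫ y, k₂ y * (e * g' t y - d₂ y * f' t x) ∂μ) (Icc 0 T) t)
    (h0 : f 0 x = f' 0 x) :
    ∀ τ ∈ Icc 0 T,
      |f τ x - f' τ x| ≤ K * exp (2 * K * μ.real univ * T) * ∫ s in 0..τ, W s := by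
  refine abs_le_mul_exp_mul_integral_of_abs_deriv_le hK (by positivity)
    (fun t ht => (hf t ht).sub (hf' t ht)) (sub_eq_zero.2 h0) hW hW0 ?_
  -- where a slice is not integrable the integrals are junk `0`, so the bound holds only a.e.
  filter_upwards [hslices] with s ⟨hfs, hf's, hgs, hg's, hWs⟩
  rw [← hWs]
  exact abs_sub_integral_add_integral_le hk₁ hk₁K hk₂ hk₂K hd₁ hd₁1 hd₂ hd₂1 he
    hfs hf's hgs hg's _ _

end

theorem exists_kernel_bound {E : Type*} [PseudoMetricSpace E] [ProperSpace E]
    [MeasurableSpace E] {μ : Measure E} {Ω : Set E} (hΩ : IsBounded Ω) (hΩm : MeasurableSet Ω)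
    {J G R : E → E → ℝ} (hJ : Continuous fun p : E × E => J p.1 p.2)
    (hG : Continuous fun p : E × E => G p.1 p.2) (hR : Continuous fun p : E × E => R p.1 p.2) :
    ∃ K, 0 ≤ K ∧ (∀ x ∈ Ω, ∀ᵐ y ∂μ.restrict Ω, |J x y| ≤ K) ∧
      (∀ x ∈ Ω, ∀ᵐ y ∂μ.restrict Ω, |G x y| ≤ K) ∧
      (∀ x ∈ Ω, ∀ᵐ y ∂μ.restrict Ω, |R x y| ≤ K) := by
  obtain ⟨K, hK⟩ := (hΩ.isCompact_closure.prod hΩ.isCompact_closure).exists_bound_of_continuousOn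
    (hJ.abs.max (hG.abs.max hR.abs)).continuousOn
  have hle : ∀ x ∈ Ω, ∀ y ∈ Ω, max |J x y| (max |G x y| |R x y|) ≤ max K 0 := fun x hx y hy =>
    (le_abs_self _).trans <|
      (hK (x, y) ⟨subset_closure hx, subset_closure hy⟩).trans (le_max_left _ _)
  refine ⟨max K 0, le_max_right _ _, ?_, ?_, ?_⟩ <;> intro x hx <;>
    refine ae_restrict_of_forall_mem hΩm fun y hy => (hle x hx y hy).trans' ?_ <;> simp

theorem stmt7_general {N : ℕ} (Ω : Set (Fin N → ℝ))
    (hΩo : IsOpen Ω) (hΩb : IsBounded Ω)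
    (J G R : (Fin N → ℝ) → (Fin N → ℝ) → ℝ)
    (hJ : KernelH J) (hG : KernelH G) (hR : KernelH R)
    (X : (Fin N → ℝ) → ℝ) (hXmeas : Measurable X) (hX : ∀ x ∈ Ω, 0 < X x ∧ X x < 1)
    (T : ℝ) (hT : 0 < T)
    (a0 b0 : (Fin N → ℝ) → ℝ)
    (a b a' b' : ℝ → (Fin N → ℝ) → ℝ)
    (haL2 : MemLp (fun p : ℝ × (Fin N → ℝ) => a p.1 p.2) 2 (((volume : Measure ℝ).restrict (Set.Ioo 0 T)).prod (volume.restrict Ω)))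
    (hbL2 : MemLp (fun p : ℝ × (Fin N → ℝ) => b p.1 p.2) 2 (((volume : Measure ℝ).restrict (Set.Ioo 0 T)).prod (volume.restrict Ω)))
    (ha'L2 : MemLp (fun p : ℝ × (Fin N → ℝ) => a' p.1 p.2) 2 (((volume : Measure ℝ).restrict (Set.Ioo 0 T)).prod (volume.restrict Ω)))
    (hb'L2 : MemLp (fun p : ℝ × (Fin N → ℝ) => b' p.1 p.2) 2 (((volume : Measure ℝ).restrict (Set.Ioo 0 T)).prod (volume.restrict Ω)))
    (hsysa : ∀ x ∈ Ω, ∀ t ∈ Set.Icc (0 : ℝ) T,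
      HasDerivWithinAt (fun s => a s x)
          ((∫ y in Ω, J x y * (X x * a t y - X y * a t x)) +
            (∫ y in Ω, R x y * (X x * b t y - (1 - X y) * a t x))) (Set.Icc 0 T) t)
    (hsysb : ∀ x ∈ Ω, ∀ t ∈ Set.Icc (0 : ℝ) T,
      HasDerivWithinAt (fun s => b s x)
          ((∫ y in Ω, G x y * ((1 - X x) * b t y - (1 - X y) * b t x)) +
            (∫ y in Ω, R x y * ((1 - X x) * a t y - X y * b t x))) (Set.Icc 0 T) t)
    (hsysa' : ∀ x ∈ Ω, ∀ t ∈ Set.Icc (0 : ℝ) T,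
      HasDerivWithinAt (fun s => a' s x)
          ((∫ y in Ω, J x y * (X x * a' t y - X y * a' t x)) +
            (∫ y in Ω, R x y * (X x * b' t y - (1 - X y) * a' t x))) (Set.Icc 0 T) t)
    (hsysb' : ∀ x ∈ Ω, ∀ t ∈ Set.Icc (0 : ℝ) T,
      HasDerivWithinAt (fun s => b' s x)
          ((∫ y in Ω, G x y * ((1 - X x) * b' t y - (1 - X y) * b' t x)) +
            (∫ y in Ω, R x y * ((1 - X x) * a' t y - X y * b' t x))) (Set.Icc 0 T) t)
    (hinita : ∀ x ∈ Ω, a 0 x = a0 x) (hinitb : ∀ x ∈ Ω, b 0 x = b0 x)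
    (hinita' : ∀ x ∈ Ω, a' 0 x = a0 x) (hinitb' : ∀ x ∈ Ω, b' 0 x = b0 x) :
    (∀ᵐ p ∂(((volume : Measure ℝ).restrict (Set.Ioo 0 T)).prod (volume.restrict Ω)), a p.1 p.2 = a' p.1 p.2) ∧
      (∀ᵐ p ∂(((volume : Measure ℝ).restrict (Set.Ioo 0 T)).prod (volume.restrict Ω)), b p.1 p.2 = b' p.1 p.2) := by
  have hΩm : MeasurableSet Ω := hΩo.measurableSet
  have : IsFiniteMeasure (volume.restrict Ω) := isFiniteMeasure_restrict.2 hΩb.measure_lt_top.ne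
  obtain ⟨K, hK, hKJ, hKG, hKR⟩ := exists_kernel_bound (μ := volume) hΩb hΩm hJ.1 hG.1 hR.1
  have hXx : ∀ x ∈ Ω, |X x| ≤ 1 ∧ |1 - X x| ≤ 1 := fun x hx => by
    obtain ⟨h0, h1⟩ := hX x hx
    exact ⟨abs_le.2 ⟨by linarith, by linarith⟩, abs_le.2 ⟨by linarith, by linarith⟩⟩
  have hX1 := ae_restrict_of_forall_mem (μ := volume) hΩm fun y hy => (hXx y hy).1
  have hX2 := ae_restrict_of_forall_mem (μ := volume) hΩm fun y hy => (hXx y hy).2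
  set U : ℝ × (Fin N → ℝ) → ℝ := fun p => |a p.1 p.2 - a' p.1 p.2| + |b p.1 p.2 - b' p.1 p.2|
  have hU0 : 0 ≤ U := fun p => by positivity
  have hU : Integrable U (((volume : Measure ℝ).restrict (Ioo 0 T)).prod (volume.restrict Ω)) :=
    ((haL2.integrable one_le_two).sub (ha'L2.integrable one_le_two)).abs.add
      ((hbL2.integrable one_le_two).sub (hb'L2.integrable one_le_two)).abs
  set W : ℝ → ℝ := fun s => ∫ y in Ω, U (s, y)
  have hslices : ∀ᵐ s ∂volume.restrict (Ioo 0 T), Integrable (a s) (volume.restrict Ω) ∧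
      Integrable (a' s) (volume.restrict Ω) ∧ Integrable (b s) (volume.restrict Ω) ∧
      Integrable (b' s) (volume.restrict Ω) ∧
      (∫ y in Ω, |a s y - a' s y|) + ∫ y in Ω, |b s y - b' s y| = W s := by
    filter_upwards [(haL2.integrable one_le_two).prod_right_ae,
      (ha'L2.integrable one_le_two).prod_right_ae, (hbL2.integrable one_le_two).prod_right_ae,
      (hb'L2.integrable one_le_two).prod_right_ae] with s ha ha' hb hb'
    exact ⟨ha, ha', hb, hb', (integral_add (ha.sub ha').abs (hb.sub hb').abs).symm⟩
  have hW : IntegrableOn W (Ioo 0 T) := hU.integral_prod_left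
  have hW0 : 0 ≤ W := fun s => integral_nonneg fun y => hU0 (s, y)
  have hua := fun x hx => abs_sub_le_mul_integral_of_hasDerivWithinAt hK
    (hJ.1.comp (.prodMk_right x)).aestronglyMeasurable (hKJ x hx)
    (hR.1.comp (.prodMk_right x)).aestronglyMeasurable (hKR x hx)
    hXmeas.aestronglyMeasurable hX1 (d₂ := fun y => 1 - X y)
    (measurable_const.sub hXmeas).aestronglyMeasurable hX2 (hXx x hx).1 hW hW0 hslices
    (hsysa x hx) (hsysa' x hx) ((hinita x hx).trans (hinita' x hx).symm)
  have hub := fun x hx => abs_sub_le_mul_integral_of_hasDerivWithinAt hK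
    (hG.1.comp (.prodMk_right x)).aestronglyMeasurable (hKG x hx)
    (hR.1.comp (.prodMk_right x)).aestronglyMeasurable (hKR x hx) (d₁ := fun y => 1 - X y)
    (measurable_const.sub hXmeas).aestronglyMeasurable hX2 hXmeas.aestronglyMeasurable hX1
    (hXx x hx).2 hW hW0
    (hslices.mono fun s ⟨ha, ha', hb, hb', hWs⟩ => ⟨hb, hb', ha, ha', (add_comm _ _).trans hWs⟩)
    (hsysb x hx) (hsysb' x hx) ((hinitb x hx).trans (hinitb' x hx).symm)
  have hUzero := ae_eq_zero_of_le_mul_integral_integral hT.le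
    (L := 2 * (K * exp (2 * K * (volume.restrict Ω).real univ * T))) (by positivity) hU0 hU
    fun τ hτ => ae_restrict_of_forall_mem hΩm fun x hx => by
      linarith [hua x hx τ hτ, hub x hx τ hτ]
  have hsame : ∀ᵐ p ∂((volume : Measure ℝ).restrict (Ioo 0 T)).prod (volume.restrict Ω),
      a p.1 p.2 = a' p.1 p.2 ∧ b p.1 p.2 = b' p.1 p.2 := by
    filter_upwards [hUzero] with p hp
    obtain ⟨h₁, h₂⟩ := (add_eq_zero_iff_of_nonneg (abs_nonneg _) (abs_nonneg _)).1 hp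
    exact ⟨sub_eq_zero.1 (abs_eq_zero.1 h₁), sub_eq_zero.1 (abs_eq_zero.1 h₂)⟩
  exact ⟨hsame.mono fun _ h => h.1, hsame.mono fun _ h => h.2⟩

theorem stmt7 {N : ℕ} (Ω : Set (Fin N → ℝ))
    (hΩo : IsOpen Ω) (hΩb : IsBounded Ω) (hΩc : IsConnected Ω)
    (J G R : (Fin N → ℝ) → (Fin N → ℝ) → ℝ)
    (hJ : KernelH J) (hG : KernelH G) (hR : KernelH R)
    (X : (Fin N → ℝ) → ℝ) (hXmeas : Measurable X) (hX : ∀ x ∈ Ω, 0 < X x ∧ X x < 1)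
    (T : ℝ) (hT : 0 < T)
    (a0 b0 : (Fin N → ℝ) → ℝ)
    (ha0 : MemLp a0 2 (volume.restrict Ω)) (hb0 : MemLp b0 2 (volume.restrict Ω))
    (a b a' b' : ℝ → (Fin N → ℝ) → ℝ)
    (haL2 : MemLp (fun p : ℝ × (Fin N → ℝ) => a p.1 p.2) 2 (((volume : Measure ℝ).restrict (Set.Ioo 0 T)).prod (volume.restrict Ω)))
    (hbL2 : MemLp (fun p : ℝ × (Fin N → ℝ) => b p.1 p.2) 2 (((volume : Measure ℝ).restrict (Set.Ioo 0 T)).prod (volume.restrict Ω)))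
    (ha'L2 : MemLp (fun p : ℝ × (Fin N → ℝ) => a' p.1 p.2) 2 (((volume : Measure ℝ).restrict (Set.Ioo 0 T)).prod (volume.restrict Ω)))
    (hb'L2 : MemLp (fun p : ℝ × (Fin N → ℝ) => b' p.1 p.2) 2 (((volume : Measure ℝ).restrict (Set.Ioo 0 T)).prod (volume.restrict Ω)))
    (hsysa : ∀ x ∈ Ω, ∀ t ∈ Set.Icc (0 : ℝ) T,
      HasDerivWithinAt (fun s => a s x)
          ((∫ y in Ω, J x y * (X x * a t y - X y * a t x)) +
            (∫ y in Ω, R x y * (X x * b t y - (1 - X y) * a t x))) (Set.Icc 0 T) t)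
    (hsysb : ∀ x ∈ Ω, ∀ t ∈ Set.Icc (0 : ℝ) T,
      HasDerivWithinAt (fun s => b s x)
          ((∫ y in Ω, G x y * ((1 - X x) * b t y - (1 - X y) * b t x)) +
            (∫ y in Ω, R x y * ((1 - X x) * a t y - X y * b t x))) (Set.Icc 0 T) t)
    (hsysa' : ∀ x ∈ Ω, ∀ t ∈ Set.Icc (0 : ℝ) T,
      HasDerivWithinAt (fun s => a' s x)
          ((∫ y in Ω, J x y * (X x * a' t y - X y * a' t x)) +
            (∫ y in Ω, R x y * (X x * b' t y - (1 - X y) * a' t x))) (Set.Icc 0 T) t)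
    (hsysb' : ∀ x ∈ Ω, ∀ t ∈ Set.Icc (0 : ℝ) T,
      HasDerivWithinAt (fun s => b' s x)
          ((∫ y in Ω, G x y * ((1 - X x) * b' t y - (1 - X y) * b' t x)) +
            (∫ y in Ω, R x y * ((1 - X x) * a' t y - X y * b' t x))) (Set.Icc 0 T) t)
    (hinita : ∀ x ∈ Ω, a 0 x = a0 x) (hinitb : ∀ x ∈ Ω, b 0 x = b0 x)
    (hinita' : ∀ x ∈ Ω, a' 0 x = a0 x) (hinitb' : ∀ x ∈ Ω, b' 0 x = b0 x) :
    (∀ᵐ p ∂(((volume : Measure ℝ).restrict (Set.Ioo 0 T)).prod (volume.restrict Ω)), a p.1 p.2 = a' p.1 p.2) ∧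
      (∀ᵐ p ∂(((volume : Measure ℝ).restrict (Set.Ioo 0 T)).prod (volume.restrict Ω)), b p.1 p.2 = b' p.1 p.2) :=
  stmt7_general Ω hΩo hΩb J G R hJ hG hR X hXmeas hX T hT a0 b0 a b a' b' haL2 hbL2 ha'L2 hb'L2
    hsysa hsysb hsysa' hsysb' hinita hinitb hinita' hinitb'
end

section
/- Fix T > 0 and u_0 ∈ L²(Ω). Suppose (μ_t(·,1), μ_t(·,2))_{t∈[0,T]} and (μ̃_t(·,1), μ̃_t(·,2))_{t∈[0,T]} are two pairs of trajectories of finite signed measures on Ω̄ that both satisfy, for every g ∈ C(Ω̄): d/dt ∫ g(x) μ_t(dx,1) = ∫∫ g(x) J(x,y) X(x) dx μ_t(dy,1) − ∫∫ g(x) J(x,y) X(y) dy μ_t(dx,1) − ∫∫ g(x) R(x,y)(1−X(y)) dy μ_t(dx,1) + ∫∫ g(x) R(x,y) X(x) dx μ_t(dy,2), and d/dt ∫ g(x) μ_t(dx,2) = ∫∫ g(x)(1−X(x)) R(x,y) dx μ_t(dy,1) + ∫∫ g(x)(1−X(x)) G(x,y) dx μ_t(dy,2) − ∫∫ g(x)(1−X(y))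 G(x,y) dy μ_t(dx,2) − ∫∫ g(x) X(y) R(x,y) dy μ_t(dx,2), with the same initial conditions ∫ g μ_0(dx,1) = ∫_Ω g(x) u_0(x) X(x) dx and ∫ g μ_0(dx,2) = ∫_Ω g(x) u_0(x)(1−X(x)) dx. Then μ_t(·,i) = μ̃_t(·,i) for all t ∈ [0,T] and i ∈ {1,2}. -/
open MeasureTheory Set Filter Topology Bornology

/-- Integral of a real function against a (finite) signed measure, via the Jordan
decomposition. -/
noncomputable def sInt {α : Type*} [MeasurableSpace α] (f : α → ℝ)
    (μ : MeasureTheory.SignedMeasure α) : ℝ :=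
  (∫ x, f x ∂μ.toJordanDecomposition.posPart) - ∫ x, f x ∂μ.toJordanDecomposition.negPart

open scoped BoundedContinuousFunction

/-!
A signed measure carried by the compact set `K = closure Ω` is determined by the functional
`f ↦ ∫ f dμ` on bounded continuous functions `f`. Let `L₁ t`, `L₂ t` be the differences of these
functionals for the two solutions; they vanish at `t = 0`. Tested with `f`, the right-hand sides
integrate the measures against functions that are continuous on `K` with sup norm on `K` at most
`B ‖f‖`; extending them off `K` by Tietze without increasing the norm shows that `t ↦ L_i t f` has
a derivative bounded by `3 B ‖f‖ (‖L₁ t‖ + ‖L₂ t‖)`. Banach–Steinhaus bounds `‖L₁ t‖ + ‖L₂ t‖` by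
some `M` on `[0, T]`, and iterating the resulting integral inequality improves this to
`M (C t)ⁿ / n!` for every `n`.
-/

theorem le_zero_of_le_mul_integral {u : ℝ → ℝ} {T M C : ℝ} (hM : ∀ t ∈ Icc 0 T, u t ≤ M)
    (hu : ∀ t ∈ Icc 0 T, ∀ φ : ℝ → ℝ, Continuous φ → (∀ s ∈ Icc 0 t, u s ≤ φ s) →
      u t ≤ C * ∫ s in 0..t, φ s) :
    ∀ t ∈ Icc 0 T, u t ≤ 0 := by
  have iterate : ∀ n : ℕ, ∀ t ∈ Icc 0 T, u t ≤ M * (C * t) ^ n / n.factorial := by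
    intro n
    induction n with
    | zero => simpa using hM
    | succ n ih =>
      intro t ht
      calc u t ≤ C * ∫ s in 0..t, M * (C * s) ^ n / n.factorial :=
            hu t ht _ (by fun_prop) fun s hs => ih s ⟨hs.1, hs.2.trans ht.2⟩
        _ = M * (C * t) ^ (n + 1) / (n + 1).factorial := by
          simp only [mul_pow, intervalIntegral.integral_div, intervalIntegral.integral_const_mul,
            integral_pow, Nat.factorial_succ, Nat.cast_mul]
          field_simp
          push_cast
          ring
  intro t ht
  have hlim : Tendsto (fun n : ℕ => M * (C * t) ^ n / n.factorial) atTop (𝓝 0) := by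
    simpa [mul_div_assoc] using (FloorSemiring.tendsto_pow_div_factorial_atTop (C * t)).const_mul M
  exact ge_of_tendsto' hlim fun n => iterate n t ht

theorem norm_sub_le_integral_of_hasDerivWithinAt {E : Type*} [NormedAddCommGroup E]
    [NormedSpace ℝ E] {f f' : ℝ → E} {ψ : ℝ → ℝ} {a b t : ℝ}
    (hf : ∀ s ∈ Icc a b, HasDerivWithinAt f (f' s) (Icc a b) s) (hψ : Continuous ψ)
    (ht : t ∈ Icc a b) (hbound : ∀ s ∈ Ico a t, ‖f' s‖ ≤ ψ s) :
    ‖f t - f a‖ ≤ ∫ s in a..t, ψ s := by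
  have hsub : Icc a t ⊆ Icc a b := Icc_subset_Icc_right ht.2
  refine image_norm_le_of_norm_deriv_right_le_deriv_boundary (f := fun s => f s - f a)
    (fun s hs => ((hf s (hsub hs)).sub_const (f a)).continuousWithinAt.mono hsub) (fun s hs => ?_)
    (by simp) (fun s => (hψ.integral_hasStrictDerivAt a s).hasDerivAt) hbound ⟨ht.1, le_rfl⟩
  exact ((hf s (hsub (Ico_subset_Icc_self hs))).sub_const (f a)).mono_of_mem_nhdsWithin
    (mem_of_superset (Icc_mem_nhdsGE (hs.2.trans_le ht.2)) (Icc_subset_Icc_left hs.1))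

theorem exists_opNorm_le_of_continuousOn {𝕜 X E F : Type*} [NontriviallyNormedField 𝕜]
    [TopologicalSpace X] [NormedAddCommGroup E] [NormedSpace 𝕜 E] [CompleteSpace E]
    [NormedAddCommGroup F] [NormedSpace 𝕜 F] {L : X → E →L[𝕜] F} {S : Set X}
    (hS : IsCompact S) (hL : ∀ f, ContinuousOn (fun s => L s f) S) :
    ∃ M, ∀ s ∈ S, ‖L s‖ ≤ M := by
  obtain ⟨M, hM⟩ := banach_steinhaus (g := fun s : S => L s) fun f => by
    obtain ⟨C, hC⟩ := hS.exists_bound_of_continuousOn (hL f)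
    exact ⟨C, fun s => hC s s.2⟩
  exact ⟨M, fun s hs => hM ⟨s, hs⟩⟩

theorem eq_zero_of_abs_deriv_apply_le {ι E : Type*} [Fintype ι] [NormedAddCommGroup E]
    [NormedSpace ℝ E] [CompleteSpace E] {L : ι → ℝ → E →L[ℝ] ℝ} {T A : ℝ} (hA : 0 ≤ A)
    (h0 : ∀ i, L i 0 = 0)
    (hL : ∀ i f, ∀ s ∈ Icc 0 T, ∃ D, HasDerivWithinAt (fun r => L i r f) D (Icc 0 T) s ∧
      |D| ≤ A * ‖f‖ * ∑ j, ‖L j s‖) :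
    ∀ i, ∀ t ∈ Icc 0 T, L i t = 0 := by
  choose! D hD hDle using hL
  set u : ℝ → ℝ := fun s => ∑ j, ‖L j s‖
  have hu0 : ∀ s, 0 ≤ u s := fun s => Finset.sum_nonneg fun j _ => norm_nonneg _
  choose M hM using fun i => exists_opNorm_le_of_continuousOn isCompact_Icc
    fun f s hs => (hD i f s hs).continuousWithinAt
  have step : ∀ t ∈ Icc 0 T, ∀ φ : ℝ → ℝ, Continuous φ → (∀ s ∈ Icc 0 t, u s ≤ φ s) →
      ∀ i, ‖L i t‖ ≤ A * ∫ s in 0..t, φ s := by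
    intro t ht φ hφ huφ i
    refine ContinuousLinearMap.opNorm_le_bound _
      (mul_nonneg hA (intervalIntegral.integral_nonneg ht.1 fun s hs => (hu0 s).trans (huφ s hs)))
      fun f => ?_
    have h := norm_sub_le_integral_of_hasDerivWithinAt (f := fun r => L i r f)
      (ψ := fun s => A * ‖f‖ * φ s) (hD i f) (by fun_prop) ht fun s hs =>
        (hDle i f s ⟨hs.1, hs.2.le.trans ht.2⟩).trans
          (mul_le_mul_of_nonneg_left (huφ s (Ico_subset_Icc_self hs)) (by positivity))
    rw [h0, zero_apply, sub_zero, intervalIntegral.integral_const_mul] at h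
    linarith
  have hu : ∀ t ∈ Icc 0 T, u t ≤ 0 := by
    refine le_zero_of_le_mul_integral (M := ∑ i, M i) (C := Fintype.card ι * A)
      (fun t ht => Finset.sum_le_sum fun i _ => hM i t ht) fun t ht φ hφ huφ => ?_
    calc u t ≤ ∑ _i : ι, A * ∫ s in 0..t, φ s := Finset.sum_le_sum fun i _ => step t ht φ hφ huφ i
      _ = Fintype.card ι * A * ∫ s in 0..t, φ s := by simp [mul_assoc]
  intro i t ht
  exact norm_le_zero_iff.1 <|
    (Finset.single_le_sum (fun j _ => norm_nonneg (L j t)) (Finset.mem_univ i)).trans (hu t ht)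

section SignedMeasure

variable {α : Type*} [MeasurableSpace α]

theorem SignedMeasure.totalVariation_eq_zero_of_forall_subset {m : SignedMeasure α} {A : Set α}
    (hA : MeasurableSet A) (h : ∀ s, MeasurableSet s → s ⊆ A → m s = 0) :
    m.totalVariation A = 0 := by
  obtain ⟨i, hi, hpos, hneg, hp, hn⟩ := m.toJordanDecomposition_spec
  simp only [SignedMeasure.totalVariation, Measure.coe_add, Pi.add_apply, add_eq_zero, hp, hn,
    SignedMeasure.toMeasureOfZeroLE_apply _ hpos hi hA,
    SignedMeasure.toMeasureOfLEZero_apply _ hneg hi.compl hA,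
    h _ (hi.inter hA) inter_subset_right, h _ (hi.compl.inter hA) inter_subset_right]
  simp

theorem sInt_congr {m : SignedMeasure α} {A : Set α} (hm : m.totalVariation Aᶜ = 0)
    {f g : α → ℝ} (hfg : EqOn f g A) : sInt f m = sInt g m := by
  simp only [SignedMeasure.totalVariation, Measure.coe_add, Pi.add_apply, add_eq_zero] at hm
  unfold sInt
  rw [integral_congr_ae (eventuallyEq_of_mem (mem_ae_iff.2 hm.1) hfg),
    integral_congr_ae (eventuallyEq_of_mem (mem_ae_iff.2 hm.2) hfg)]

variable [TopologicalSpace α] [OpensMeasurableSpace α]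

noncomputable def BoundedContinuousFunction.integralCLM (μ : Measure α) [IsFiniteMeasure μ] :
    (α →ᵇ ℝ) →L[ℝ] ℝ :=
  LinearMap.mkContinuous
    { toFun := fun f => ∫ x, f x ∂μ
      map_add' := fun f g => integral_add (f.integrable μ) (g.integrable μ)
      map_smul' := fun c _ => integral_const_mul c _ }
    (μ.real univ) fun f => f.norm_integral_le_mul_norm μ

noncomputable def sIntCLM (m : SignedMeasure α) : (α →ᵇ ℝ) →L[ℝ] ℝ :=
  BoundedContinuousFunction.integralCLM m.toJordanDecomposition.posPart
    - BoundedContinuousFunction.integralCLM m.toJordanDecomposition.negPart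

theorem sIntCLM_apply (m : SignedMeasure α) (f : α →ᵇ ℝ) : sIntCLM m f = sInt f m := rfl

theorem sIntCLM_injective [HasOuterApproxClosed α] [BorelSpace α] :
    Function.Injective (sIntCLM : SignedMeasure α → (α →ᵇ ℝ) →L[ℝ] ℝ) := by
  intro m n h
  set m' := m.toJordanDecomposition
  set n' := n.toJordanDecomposition
  have hsum : m'.posPart + n'.negPart = n'.posPart + m'.negPart := by
    refine ext_of_forall_integral_eq_of_IsFiniteMeasure fun f => ?_
    have hf := DFunLike.congr_fun h f
    simp only [sIntCLM_apply, sInt] at hf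
    rw [integral_add_measure (f.integrable _) (f.integrable _),
      integral_add_measure (f.integrable _) (f.integrable _)]
    linarith
  ext s hs
  have hs' : m'.posPart.real s + n'.negPart.real s = n'.posPart.real s + m'.negPart.real s := by
    rw [← measureReal_add_apply, hsum, measureReal_add_apply]
  rw [m.apply_eq_posPart_real_sub_negPart_real hs, n.apply_eq_posPart_real_sub_negPart_real hs]
  linarith

theorem abs_sInt_sub_le [NormalSpace α] {K : Set α} (hK : IsClosed K) {m n : SignedMeasure α}
    (hm : m.totalVariation Kᶜ = 0) (hn : n.totalVariation Kᶜ = 0) {h : α → ℝ}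
    (hc : ContinuousOn h K) {b : ℝ} (hb : 0 ≤ b) (hhb : ∀ x ∈ K, |h x| ≤ b) :
    |sInt h m - sInt h n| ≤ b * ‖sIntCLM m - sIntCLM n‖ := by
  obtain ⟨H, hHnorm, hHK⟩ := BoundedContinuousFunction.exists_norm_eq_domRestrict_eq_of_closed
    (.ofNormedAddCommGroup (K.domRestrict h) hc.domRestrict b fun x => hhb x x.2) hK
  have hHh : EqOn H h K := fun x hx => DFunLike.congr_fun hHK ⟨x, hx⟩
  have hHb : ‖H‖ ≤ b := hHnorm ▸ BoundedContinuousFunction.norm_ofNormedAddCommGroup_le _ hb _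
  rw [← sInt_congr hm hHh, ← sInt_congr hn hHh, mul_comm]
  exact ((sIntCLM m - sIntCLM n).le_opNorm H).trans (by gcongr)

end SignedMeasure

theorem abs_mul_mul_le_of_abs_le_one {a b d A B : ℝ} (ha : |a| ≤ A) (hb : |b| ≤ B)
    (hd : |d| ≤ 1) : |a * b * d| ≤ A * B := by
  have hA : 0 ≤ A := (abs_nonneg a).trans ha
  rw [abs_mul, abs_mul, ← mul_one (A * B)]
  exact mul_le_mul (mul_le_mul ha hb (abs_nonneg b) hA) hd (abs_nonneg d)
    (mul_nonneg hA ((abs_nonneg b).trans hb))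

section TestFunction

variable {α : Type*} [TopologicalSpace α] [MeasurableSpace α]

structure IsTestFunction (K : Set α) (c : ℝ) (h : α → ℝ) : Prop where
  measurable : Measurable h
  continuousOn : ContinuousOn h K
  abs_le : ∀ x ∈ K, |h x| ≤ c

variable [OpensMeasurableSpace α]

theorem BoundedContinuousFunction.isTestFunction (f : α →ᵇ ℝ) (K : Set α) :
    IsTestFunction K ‖f‖ f :=
  ⟨f.continuous.measurable, f.continuous.continuousOn, fun x _ => f.norm_coe_le_norm x⟩

variable [FirstCountableTopology α] [T2Space α] {ρ : Measure α} [IsFiniteMeasureOnCompacts ρ]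
  {K : Set α} {c : ℝ}

theorem isTestFunction_setIntegral (hK : IsCompact K) {F : α → α → ℝ}
    (hF : Measurable (Function.uncurry F)) (hFc : ∀ w ∈ K, ContinuousOn (F · w) K)
    (hFb : ∀ z ∈ K, ∀ w ∈ K, |F z w| ≤ c) :
    IsTestFunction K (c * ρ.real K) fun z => ∫ w in K, F z w ∂ρ := by
  have : IsFiniteMeasure (ρ.restrict K) := isFiniteMeasure_restrict.2 hK.measure_lt_top.ne
  have hFb' : ∀ z ∈ K, ∀ w ∈ K, ‖F z w‖ ≤ c := hFb
  refine ⟨hF.stronglyMeasurable.integral_prod_right.measurable, ?_, fun z hz => ?_⟩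
  · exact continuousOn_of_dominated
      (fun z _ => (hF.comp (measurable_const.prodMk measurable_id)).aestronglyMeasurable)
      (fun z hz => ae_restrict_of_forall_mem hK.measurableSet (hFb' z hz)) (integrable_const c)
      (ae_restrict_of_forall_mem hK.measurableSet hFc)
  · simpa [measureReal_restrict_apply_univ] using norm_integral_le_of_norm_le_const
      (ae_restrict_of_forall_mem hK.measurableSet (hFb' z hz))

variable [SecondCountableTopology α] {g w : α → ℝ} {V : α → α → ℝ} {M : ℝ}

theorem IsTestFunction.integral_mul_kernel_mul_left (hK : IsCompact K) (hg : IsTestFunction K c g)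
    (hV : Continuous (Function.uncurry V)) (hVM : ∀ x ∈ K, ∀ y ∈ K, |V x y| ≤ M)
    (hw : Measurable w) (hw1 : ∀ x ∈ K, |w x| ≤ 1) :
    IsTestFunction K (c * M * ρ.real K) fun y => ∫ x in K, g x * V x y * w x ∂ρ :=
  have := hg.measurable
  isTestFunction_setIntegral hK (by fun_prop) (fun _ _ => by fun_prop) fun y hy x hx =>
    abs_mul_mul_le_of_abs_le_one (hg.abs_le x hx) (hVM x hx y hy) (hw1 x hx)

theorem IsTestFunction.integral_mul_mul_kernel_left (hK : IsCompact K) (hg : IsTestFunction K c g)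
    (hV : Continuous (Function.uncurry V)) (hVM : ∀ x ∈ K, ∀ y ∈ K, |V x y| ≤ M)
    (hw : Measurable w) (hw1 : ∀ x ∈ K, |w x| ≤ 1) :
    IsTestFunction K (c * M * ρ.real K) fun y => ∫ x in K, g x * w x * V x y ∂ρ :=
  have := hg.measurable
  isTestFunction_setIntegral hK (by fun_prop) (fun _ _ => by fun_prop) fun y hy x hx => by
    rw [mul_right_comm]
    exact abs_mul_mul_le_of_abs_le_one (hg.abs_le x hx) (hVM x hx y hy) (hw1 x hx)

theorem IsTestFunction.integral_mul_kernel_mul_right (hK : IsCompact K)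
    (hg : IsTestFunction K c g) (hV : Continuous (Function.uncurry V))
    (hVM : ∀ x ∈ K, ∀ y ∈ K, |V x y| ≤ M) (hw : Measurable w) (hw1 : ∀ x ∈ K, |w x| ≤ 1) :
    IsTestFunction K (c * M * ρ.real K) fun x => ∫ y in K, g x * V x y * w y ∂ρ :=
  have := hg.measurable
  have := hg.continuousOn
  isTestFunction_setIntegral hK (by fun_prop) (fun _ _ => by fun_prop) fun x hx y hy =>
    abs_mul_mul_le_of_abs_le_one (hg.abs_le x hx) (hVM x hx y hy) (hw1 y hy)

theorem IsTestFunction.integral_mul_mul_kernel_right (hK : IsCompact K)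
    (hg : IsTestFunction K c g) (hV : Continuous (Function.uncurry V))
    (hVM : ∀ x ∈ K, ∀ y ∈ K, |V x y| ≤ M) (hw : Measurable w) (hw1 : ∀ x ∈ K, |w x| ≤ 1) :
    IsTestFunction K (c * M * ρ.real K) fun x => ∫ y in K, g x * w y * V x y ∂ρ :=
  have := hg.measurable
  have := hg.continuousOn
  isTestFunction_setIntegral hK (by fun_prop) (fun _ _ => by fun_prop) fun x hx y hy => by
    rw [mul_right_comm]
    exact abs_mul_mul_le_of_abs_le_one (hg.abs_le x hx) (hVM x hx y hy) (hw1 y hy)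

end TestFunction

section WeakSolution

variable {α : Type*} [MetricSpace α] [MeasurableSpace α] (ρ : Measure α) (K : Set α)
  (J G R : α → α → ℝ) (X : α → ℝ)

noncomputable def weakRhs₁ (g : α → ℝ) (m₁ m₂ : SignedMeasure α) : ℝ :=
  sInt (fun y => ∫ x in K, g x * J x y * X x ∂ρ) m₁
    - sInt (fun x => ∫ y in K, g x * J x y * X y ∂ρ) m₁
    - sInt (fun x => ∫ y in K, g x * R x y * (1 - X y) ∂ρ) m₁
    + sInt (fun y => ∫ x in K, g x * R x y * X x ∂ρ) m₂

noncomputable def weakRhs₂ (g : α → ℝ) (m₁ m₂ : SignedMeasure α) : ℝ :=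
  sInt (fun y => ∫ x in K, g x * (1 - X x) * R x y ∂ρ) m₁
    + sInt (fun y => ∫ x in K, g x * (1 - X x) * G x y ∂ρ) m₂
    - sInt (fun x => ∫ y in K, g x * (1 - X y) * G x y ∂ρ) m₂
    - sInt (fun x => ∫ y in K, g x * X y * R x y ∂ρ) m₂

def IsWeakSolution (T : ℝ) (m₁ m₂ : ℝ → SignedMeasure α) : Prop :=
  ∀ g : α → ℝ, Measurable g → ContinuousOn g K → ∀ t ∈ Icc 0 T,
    HasDerivWithinAt (fun s => sInt g (m₁ s)) (weakRhs₁ ρ K J R X g (m₁ t) (m₂ t)) (Icc 0 T) t ∧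
    HasDerivWithinAt (fun s => sInt g (m₂ s)) (weakRhs₂ ρ K G R X g (m₁ t) (m₂ t)) (Icc 0 T) t

variable [BorelSpace α] [SecondCountableTopology α] [IsFiniteMeasureOnCompacts ρ] {K J G R X}

theorem exists_abs_weakRhs_sub_le (hK : IsCompact K) (hJ : Continuous (Function.uncurry J))
    (hG : Continuous (Function.uncurry G)) (hR : Continuous (Function.uncurry R))
    (hX : Measurable X) (hX01 : ∀ x ∈ K, 0 ≤ X x ∧ X x ≤ 1) :
    ∃ B ≥ 0, ∀ (c : ℝ) (g : α → ℝ), 0 ≤ c → IsTestFunction K c g →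
      ∀ m₁ m₂ n₁ n₂ : SignedMeasure α, m₁.totalVariation Kᶜ = 0 → m₂.totalVariation Kᶜ = 0 →
        n₁.totalVariation Kᶜ = 0 → n₂.totalVariation Kᶜ = 0 →
        |weakRhs₁ ρ K J R X g m₁ m₂ - weakRhs₁ ρ K J R X g n₁ n₂|
            ≤ c * B * (3 * ‖sIntCLM m₁ - sIntCLM n₁‖ + ‖sIntCLM m₂ - sIntCLM n₂‖) ∧
          |weakRhs₂ ρ K G R X g m₁ m₂ - weakRhs₂ ρ K G R X g n₁ n₂|
            ≤ c * B * (‖sIntCLM m₁ - sIntCLM n₁‖ + 3 * ‖sIntCLM m₂ - sIntCLM n₂‖) := by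
  obtain ⟨M, hM0, hM⟩ := ((hK.prod hK).image_of_continuousOn
    (f := fun p : α × α => |J p.1 p.2| + |G p.1 p.2| + |R p.1 p.2|)
    (by fun_prop : Continuous _).continuousOn).isBounded.exists_pos_norm_le
  have hKer : ∀ x ∈ K, ∀ y ∈ K, |J x y| ≤ M ∧ |G x y| ≤ M ∧ |R x y| ≤ M := fun x hx y hy => by
    have h := hM _ ⟨(x, y), ⟨hx, hy⟩, rfl⟩
    rw [Real.norm_eq_abs, abs_of_nonneg (by positivity)] at h
    refine ⟨?_, ?_, ?_⟩ <;> linarith [abs_nonneg (J x y), abs_nonneg (G x y), abs_nonneg (R x y)]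
  have hJM := fun x hx y hy => (hKer x hx y hy).1
  have hGM := fun x hx y hy => (hKer x hx y hy).2.1
  have hRM := fun x hx y hy => (hKer x hx y hy).2.2
  have hX1 : ∀ x ∈ K, |X x| ≤ 1 := fun x hx => abs_le.2 ⟨by linarith [hX01 x hx], (hX01 x hx).2⟩
  have hX1' : ∀ x ∈ K, |1 - X x| ≤ 1 := fun x hx =>
    abs_le.2 ⟨by linarith [hX01 x hx], by linarith [hX01 x hx]⟩
  have hX' : Measurable fun x => 1 - X x := hX.const_sub 1
  refine ⟨M * ρ.real K, by positivity, fun c g hc hg m₁ m₂ n₁ n₂ hm₁ hm₂ hn₁ hn₂ => ?_⟩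
  have hdiff {h : α → ℝ} {m n : SignedMeasure α} (hh : IsTestFunction K (c * M * ρ.real K) h)
      (hm : m.totalVariation Kᶜ = 0) (hn : n.totalVariation Kᶜ = 0) :=
    abs_le.1 (abs_sInt_sub_le hK.isClosed hm hn hh.continuousOn (by positivity) hh.abs_le)
  have a₁ := hdiff (hg.integral_mul_kernel_mul_left hK hJ hJM hX hX1) hm₁ hn₁
  have a₂ := hdiff (hg.integral_mul_kernel_mul_right hK hJ hJM hX hX1) hm₁ hn₁
  have a₃ := hdiff (hg.integral_mul_kernel_mul_right hK hR hRM hX' hX1') hm₁ hn₁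
  have a₄ := hdiff (hg.integral_mul_kernel_mul_left hK hR hRM hX hX1) hm₂ hn₂
  have b₁ := hdiff (hg.integral_mul_mul_kernel_left hK hR hRM hX' hX1') hm₁ hn₁
  have b₂ := hdiff (hg.integral_mul_mul_kernel_left hK hG hGM hX' hX1') hm₂ hn₂
  have b₃ := hdiff (hg.integral_mul_mul_kernel_right hK hG hGM hX' hX1') hm₂ hn₂
  have b₄ := hdiff (hg.integral_mul_mul_kernel_right hK hR hRM hX hX1) hm₂ hn₂
  unfold weakRhs₁ weakRhs₂
  refine ⟨abs_le.2 ⟨?_, ?_⟩, abs_le.2 ⟨?_, ?_⟩⟩ <;> linarith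

theorem IsWeakSolution.unique (hK : IsCompact K) (hJ : Continuous (Function.uncurry J))
    (hG : Continuous (Function.uncurry G)) (hR : Continuous (Function.uncurry R))
    (hX : Measurable X) (hX01 : ∀ x ∈ K, 0 ≤ X x ∧ X x ≤ 1) {T : ℝ}
    {μ₁ μ₂ ν₁ ν₂ : ℝ → SignedMeasure α} (hμ : IsWeakSolution ρ K J G R X T μ₁ μ₂)
    (hν : IsWeakSolution ρ K J G R X T ν₁ ν₂)
    (hsupp : ∀ t ∈ Icc 0 T, (μ₁ t).totalVariation Kᶜ = 0 ∧ (μ₂ t).totalVariation Kᶜ = 0 ∧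
      (ν₁ t).totalVariation Kᶜ = 0 ∧ (ν₂ t).totalVariation Kᶜ = 0)
    (h0 : μ₁ 0 = ν₁ 0 ∧ μ₂ 0 = ν₂ 0) :
    ∀ t ∈ Icc 0 T, μ₁ t = ν₁ t ∧ μ₂ t = ν₂ t := by
  obtain ⟨B, hB, hlip⟩ := exists_abs_weakRhs_sub_le ρ hK hJ hG hR hX hX01
  let L : Fin 2 → ℝ → (α →ᵇ ℝ) →L[ℝ] ℝ :=
    ![fun s => sIntCLM (μ₁ s) - sIntCLM (ν₁ s), fun s => sIntCLM (μ₂ s) - sIntCLM (ν₂ s)]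
  have hL0 : ∀ i, L i 0 = 0 := Fin.forall_fin_two.2
    ⟨sub_eq_zero.2 (congrArg sIntCLM h0.1), sub_eq_zero.2 (congrArg sIntCLM h0.2)⟩
  have hL : ∀ i f, ∀ s ∈ Icc 0 T, ∃ D, HasDerivWithinAt (fun r => L i r f) D (Icc 0 T) s ∧
      |D| ≤ 3 * B * ‖f‖ * ∑ j, ‖L j s‖ := by
    intro i f s hs
    obtain ⟨hμ₁, hμ₂, hν₁, hν₂⟩ := hsupp s hs
    have hlip := hlip ‖f‖ f (norm_nonneg f) (f.isTestFunction K) _ _ _ _ hμ₁ hμ₂ hν₁ hν₂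
    have hf := hμ f f.measurable f.continuous.continuousOn s hs
    have hf' := hν f f.measurable f.continuous.continuousOn s hs
    have h₀ := mul_nonneg (mul_nonneg (norm_nonneg f) hB) (norm_nonneg (L 0 s))
    have h₁ := mul_nonneg (mul_nonneg (norm_nonneg f) hB) (norm_nonneg (L 1 s))
    simp only [L, Fin.sum_univ_two, Matrix.cons_val_zero, Matrix.cons_val_one] at h₀ h₁ ⊢
    fin_cases i
    · exact ⟨_, hf.1.sub hf'.1, by linarith [hlip.1]⟩
    · exact ⟨_, hf.2.sub hf'.2, by linarith [hlip.2]⟩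
  have hLt := eq_zero_of_abs_deriv_apply_le (by positivity) hL0 hL
  exact fun t ht => ⟨sIntCLM_injective (sub_eq_zero.1 (hLt 0 t ht)),
    sIntCLM_injective (sub_eq_zero.1 (hLt 1 t ht))⟩

end WeakSolution

theorem stmt14_general {N : ℕ} (Ω : Set (Fin N → ℝ))
    (hΩb : IsBounded Ω)
    (J G R : (Fin N → ℝ) → (Fin N → ℝ) → ℝ)
    (hJ : KernelH J) (hG : KernelH G) (hR : KernelH R)
    (X : (Fin N → ℝ) → ℝ) (hXmeas : Measurable X) (hX : ∀ x ∈ closure Ω, 0 < X x ∧ X x < 1)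
    (T : ℝ)
    (u0 : (Fin N → ℝ) → ℝ)
    (μ1 μ2 ν1 ν2 : ℝ → MeasureTheory.SignedMeasure (Fin N → ℝ))
    (hsupp : ∀ t ∈ Set.Icc (0 : ℝ) T, ∀ s : Set (Fin N → ℝ),
      MeasurableSet s → s ⊆ (closure Ω)ᶜ →
      μ1 t s = 0 ∧ μ2 t s = 0 ∧ ν1 t s = 0 ∧ ν2 t s = 0)
    (hμ : ∀ g : (Fin N → ℝ) → ℝ, Measurable g → ContinuousOn g (closure Ω) →
      ∀ t ∈ Set.Icc (0 : ℝ) T,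
        HasDerivWithinAt (fun s => sInt g (μ1 s))
          (sInt (fun y => ∫ x in closure Ω, g x * J x y * X x) (μ1 t)
            - sInt (fun x => ∫ y in closure Ω, g x * J x y * X y) (μ1 t)
            - sInt (fun x => ∫ y in closure Ω, g x * R x y * (1 - X y)) (μ1 t)
            + sInt (fun y => ∫ x in closure Ω, g x * R x y * X x) (μ2 t)) (Set.Icc 0 T) t ∧
        HasDerivWithinAt (fun s => sInt g (μ2 s))
          (sInt (fun y => ∫ x in closure Ω, g x * (1 - X x) * R x y) (μ1 t)
            + sInt (fun y => ∫ x in closure Ω, g x * (1 - X x) * G x y) (μ2 t)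
            - sInt (fun x => ∫ y in closure Ω, g x * (1 - X y) * G x y) (μ2 t)
            - sInt (fun x => ∫ y in closure Ω, g x * X y * R x y) (μ2 t)) (Set.Icc 0 T) t)
    (hν : ∀ g : (Fin N → ℝ) → ℝ, Measurable g → ContinuousOn g (closure Ω) →
      ∀ t ∈ Set.Icc (0 : ℝ) T,
        HasDerivWithinAt (fun s => sInt g (ν1 s))
          (sInt (fun y => ∫ x in closure Ω, g x * J x y * X x) (ν1 t)
            - sInt (fun x => ∫ y in closure Ω, g x * J x y * X y) (ν1 t)
            - sInt (fun x => ∫ y in closure Ω, g x * R x y * (1 - X y)) (ν1 t)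
            + sInt (fun y => ∫ x in closure Ω, g x * R x y * X x) (ν2 t)) (Set.Icc 0 T) t ∧
        HasDerivWithinAt (fun s => sInt g (ν2 s))
          (sInt (fun y => ∫ x in closure Ω, g x * (1 - X x) * R x y) (ν1 t)
            + sInt (fun y => ∫ x in closure Ω, g x * (1 - X x) * G x y) (ν2 t)
            - sInt (fun x => ∫ y in closure Ω, g x * (1 - X y) * G x y) (ν2 t)
            - sInt (fun x => ∫ y in closure Ω, g x * X y * R x y) (ν2 t)) (Set.Icc 0 T) t)
    (hμ0 : ∀ g : (Fin N → ℝ) → ℝ, Measurable g → ContinuousOn g (closure Ω) →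
      sInt g (μ1 0) = (∫ x in Ω, g x * u0 x * X x) ∧
        sInt g (μ2 0) = ∫ x in Ω, g x * u0 x * (1 - X x))
    (hν0 : ∀ g : (Fin N → ℝ) → ℝ, Measurable g → ContinuousOn g (closure Ω) →
      sInt g (ν1 0) = (∫ x in Ω, g x * u0 x * X x) ∧
        sInt g (ν2 0) = ∫ x in Ω, g x * u0 x * (1 - X x)) :
    ∀ t ∈ Set.Icc (0 : ℝ) T, μ1 t = ν1 t ∧ μ2 t = ν2 t := by
  have hK : IsCompact (closure Ω) := hΩb.isCompact_closure
  have hnull {m : SignedMeasure (Fin N → ℝ)}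
      (hm : ∀ s, MeasurableSet s → s ⊆ (closure Ω)ᶜ → m s = 0) :
      m.totalVariation (closure Ω)ᶜ = 0 :=
    SignedMeasure.totalVariation_eq_zero_of_forall_subset hK.isClosed.measurableSet.compl hm
  have hsupp' : ∀ t ∈ Icc (0 : ℝ) T, (μ1 t).totalVariation (closure Ω)ᶜ = 0 ∧
      (μ2 t).totalVariation (closure Ω)ᶜ = 0 ∧ (ν1 t).totalVariation (closure Ω)ᶜ = 0 ∧
      (ν2 t).totalVariation (closure Ω)ᶜ = 0 := fun t ht =>
    ⟨hnull fun s hs hsK => (hsupp t ht s hs hsK).1, hnull fun s hs hsK => (hsupp t ht s hs hsK).2.1,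
      hnull fun s hs hsK => (hsupp t ht s hs hsK).2.2.1,
      hnull fun s hs hsK => (hsupp t ht s hs hsK).2.2.2⟩
  have h0 : μ1 0 = ν1 0 ∧ μ2 0 = ν2 0 := by
    constructor <;> refine sIntCLM_injective (ContinuousLinearMap.ext fun f => ?_) <;>
      simp only [sIntCLM_apply, hμ0 f f.measurable f.continuous.continuousOn,
        hν0 f f.measurable f.continuous.continuousOn]
  exact IsWeakSolution.unique volume hK hJ.1 hG.1 hR.1 hXmeas
    (fun x hx => ⟨(hX x hx).1.le, (hX x hx).2.le⟩) hμ hν hsupp' h0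

theorem stmt14 {N : ℕ} (Ω : Set (Fin N → ℝ))
    (hΩo : IsOpen Ω) (hΩb : IsBounded Ω) (hΩc : IsConnected Ω)
    (J G R : (Fin N → ℝ) → (Fin N → ℝ) → ℝ)
    (hJ : KernelH J) (hG : KernelH G) (hR : KernelH R)
    (X : (Fin N → ℝ) → ℝ) (hXmeas : Measurable X) (hX : ∀ x ∈ closure Ω, 0 < X x ∧ X x < 1)
    (T : ℝ) (hT : 0 < T)
    (u0 : (Fin N → ℝ) → ℝ) (hu0 : MemLp u0 2 (volume.restrict Ω))
    (μ1 μ2 ν1 ν2 : ℝ → MeasureTheory.SignedMeasure (Fin N → ℝ))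
    (hsupp : ∀ t ∈ Set.Icc (0 : ℝ) T, ∀ s : Set (Fin N → ℝ),
      MeasurableSet s → s ⊆ (closure Ω)ᶜ →
      μ1 t s = 0 ∧ μ2 t s = 0 ∧ ν1 t s = 0 ∧ ν2 t s = 0)
    (hμ : ∀ g : (Fin N → ℝ) → ℝ, Measurable g → ContinuousOn g (closure Ω) →
      ∀ t ∈ Set.Icc (0 : ℝ) T,
        HasDerivWithinAt (fun s => sInt g (μ1 s))
          (sInt (fun y => ∫ x in closure Ω, g x * J x y * X x) (μ1 t)
            - sInt (fun x => ∫ y in closure Ω, g x * J x y * X y) (μ1 t)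
            - sInt (fun x => ∫ y in closure Ω, g x * R x y * (1 - X y)) (μ1 t)
            + sInt (fun y => ∫ x in closure Ω, g x * R x y * X x) (μ2 t)) (Set.Icc 0 T) t ∧
        HasDerivWithinAt (fun s => sInt g (μ2 s))
          (sInt (fun y => ∫ x in closure Ω, g x * (1 - X x) * R x y) (μ1 t)
            + sInt (fun y => ∫ x in closure Ω, g x * (1 - X x) * G x y) (μ2 t)
            - sInt (fun x => ∫ y in closure Ω, g x * (1 - X y) * G x y) (μ2 t)
            - sInt (fun x => ∫ y in closure Ω, g x * X y * R x y) (μ2 t)) (Set.Icc 0 T) t)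
    (hν : ∀ g : (Fin N → ℝ) → ℝ, Measurable g → ContinuousOn g (closure Ω) →
      ∀ t ∈ Set.Icc (0 : ℝ) T,
        HasDerivWithinAt (fun s => sInt g (ν1 s))
          (sInt (fun y => ∫ x in closure Ω, g x * J x y * X x) (ν1 t)
            - sInt (fun x => ∫ y in closure Ω, g x * J x y * X y) (ν1 t)
            - sInt (fun x => ∫ y in closure Ω, g x * R x y * (1 - X y)) (ν1 t)
            + sInt (fun y => ∫ x in closure Ω, g x * R x y * X x) (ν2 t)) (Set.Icc 0 T) t ∧
        HasDerivWithinAt (fun s => sInt g (ν2 s))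
          (sInt (fun y => ∫ x in closure Ω, g x * (1 - X x) * R x y) (ν1 t)
            + sInt (fun y => ∫ x in closure Ω, g x * (1 - X x) * G x y) (ν2 t)
            - sInt (fun x => ∫ y in closure Ω, g x * (1 - X y) * G x y) (ν2 t)
            - sInt (fun x => ∫ y in closure Ω, g x * X y * R x y) (ν2 t)) (Set.Icc 0 T) t)
    (hμ0 : ∀ g : (Fin N → ℝ) → ℝ, Measurable g → ContinuousOn g (closure Ω) →
      sInt g (μ1 0) = (∫ x in Ω, g x * u0 x * X x) ∧
        sInt g (μ2 0) = ∫ x in Ω, g x * u0 x * (1 - X x))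
    (hν0 : ∀ g : (Fin N → ℝ) → ℝ, Measurable g → ContinuousOn g (closure Ω) →
      sInt g (ν1 0) = (∫ x in Ω, g x * u0 x * X x) ∧
        sInt g (ν2 0) = ∫ x in Ω, g x * u0 x * (1 - X x)) :
    ∀ t ∈ Set.Icc (0 : ℝ) T, μ1 t = ν1 t ∧ μ2 t = ν2 t :=
  stmt14_general Ω hΩb J G R hJ hG hR X hXmeas hX T u0 μ1 μ2 ν1 ν2 hsupp hμ hν hμ0 hν0
end
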